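/- arXiv:2105.02528 — 3 statements merged into one kernel-verified Lean document; each statement's English description precedes it below -/
import Mathlib

section
/- Let H be a cocommutative weak Hopf algebra, (B,φ_B) a left weak H-module algebra, and σ ∈ Reg_{φ_B}(H^{⊗2},B) satisfying the twisted condition. Then φ_B is φ_B-invertible: there exists φ_B^† : H⊗B → B with φ_B ∧ φ_B^† = μ_B∘(u_1⊗B). -/
open TensorProduct LinearMap

noncomputable section

namespace WK

/-- A weak bialgebra structure on a `k`-module `H`. -/
structure WeakBialgebraStr (k : Type) [CommRing k] (H : Type) [AddCommGroup H] [Module k H] :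
    Type where
  mu : H ⊗[k] H →ₗ[k] H
  one : H
  delta : H →ₗ[k] H ⊗[k] H
  eps : H →ₗ[k] k
  mul_assoc' : ∀ x y z : H, mu (mu (x ⊗ₜ[k] y) ⊗ₜ[k] z) = mu (x ⊗ₜ[k] mu (y ⊗ₜ[k] z))
  one_mul' : ∀ x : H, mu (one ⊗ₜ[k] x) = x
  mul_one' : ∀ x : H, mu (x ⊗ₜ[k] one) = x
  coassoc : ∀ x : H, rTensor H delta (delta x)
      = (TensorProduct.assoc k H H H).symm (lTensor H delta (delta x))
  counit_l : ∀ x : H, TensorProduct.lid k H (rTensor H eps (delta x)) = x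
  counit_r : ∀ x : H, TensorProduct.rid k H (lTensor H eps (delta x)) = x
  a1 : ∀ x y : H, delta (mu (x ⊗ₜ[k] y))
      = TensorProduct.map mu mu (tensorTensorTensorComm k H H H H (delta x ⊗ₜ[k] delta y))
  a2 : ∀ x y z : H, eps (mu (mu (x ⊗ₜ[k] y) ⊗ₜ[k] z))
      = LinearMap.mul' k k (TensorProduct.map (eps ∘ₗ mu)
          ((eps ∘ₗ mu) ∘ₗ (TensorProduct.comm k H H).toLinearMap)
          (tensorTensorTensorComm k H H H H ((x ⊗ₜ[k] z) ⊗ₜ[k] delta y)))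
  a2' : ∀ x y z : H, eps (mu (mu (x ⊗ₜ[k] y) ⊗ₜ[k] z))
      = LinearMap.mul' k k (TensorProduct.map (eps ∘ₗ mu)
          ((eps ∘ₗ mu) ∘ₗ (TensorProduct.comm k H H).toLinearMap)
          (tensorTensorTensorComm k H H H H
            ((x ⊗ₜ[k] z) ⊗ₜ[k] (TensorProduct.comm k H H (delta y)))))
  a3 : rTensor H delta (delta one)
      = rTensor H (lTensor H mu ∘ₗ (TensorProduct.assoc k H H H).toLinearMap)
          ((TensorProduct.assoc k (H ⊗[k] H) H H).symm (delta one ⊗ₜ[k] delta one))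
  a3' : rTensor H delta (delta one)
      = rTensor H (lTensor H (mu ∘ₗ (TensorProduct.comm k H H).toLinearMap)
            ∘ₗ (TensorProduct.assoc k H H H).toLinearMap)
          ((TensorProduct.assoc k (H ⊗[k] H) H H).symm (delta one ⊗ₜ[k] delta one))

variable {k : Type} [CommRing k] {H : Type} [AddCommGroup H] [Module k H]

namespace WeakBialgebraStr

variable (W : WeakBialgebraStr k H)

/-- `ε ∘ μ`. -/
def epsmu : H ⊗[k] H →ₗ[k] k := W.eps ∘ₗ W.mu

/-- The target map `Π^L`, `Π^L(h) = ε(1₍₁₎ h) 1₍₂₎`. -/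
def piL : H →ₗ[k] H :=
  (TensorProduct.lid k H).toLinearMap ∘ₗ rTensor H W.epsmu
    ∘ₗ (TensorProduct.assoc k H H H).symm.toLinearMap
    ∘ₗ lTensor H (TensorProduct.comm k H H).toLinearMap
    ∘ₗ (TensorProduct.assoc k H H H).toLinearMap
    ∘ₗ TensorProduct.mk k (H ⊗[k] H) H (W.delta W.one)

/-- The source map `Π^R`, `Π^R(h) = 1₍₁₎ ε(h 1₍₂₎)`. -/
def piR : H →ₗ[k] H :=
  (TensorProduct.rid k H).toLinearMap ∘ₗ lTensor H W.epsmu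
    ∘ₗ lTensor H (TensorProduct.comm k H H).toLinearMap
    ∘ₗ (TensorProduct.assoc k H H H).toLinearMap
    ∘ₗ TensorProduct.mk k (H ⊗[k] H) H (W.delta W.one)

/-- `Π̄^L(h) = 1₍₁₎ ε(1₍₂₎ h)`. -/
def pibarL : H →ₗ[k] H :=
  (TensorProduct.rid k H).toLinearMap ∘ₗ lTensor H W.epsmu
    ∘ₗ (TensorProduct.assoc k H H H).toLinearMap
    ∘ₗ TensorProduct.mk k (H ⊗[k] H) H (W.delta W.one)

/-- `Π̄^R(h) = ε(h 1₍₁₎) 1₍₂₎`. -/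
def pibarR : H →ₗ[k] H :=
  (TensorProduct.lid k H).toLinearMap ∘ₗ rTensor H W.epsmu
    ∘ₗ (TensorProduct.assoc k H H H).symm.toLinearMap
    ∘ₗ (TensorProduct.comm k (H ⊗[k] H) H).toLinearMap
    ∘ₗ TensorProduct.mk k (H ⊗[k] H) H (W.delta W.one)

end WeakBialgebraStr

/-- A weak Hopf algebra structure: a weak bialgebra with an antipode. -/
structure WeakHopfStr (k : Type) [CommRing k] (H : Type) [AddCommGroup H] [Module k H]
    extends WeakBialgebraStr k H where
  lam : H →ₗ[k] H
  antipode_r : toWeakBialgebraStr.mu ∘ₗ TensorProduct.map LinearMap.id lam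
      ∘ₗ toWeakBialgebraStr.delta = toWeakBialgebraStr.piL
  antipode_l : toWeakBialgebraStr.mu ∘ₗ TensorProduct.map lam LinearMap.id
      ∘ₗ toWeakBialgebraStr.delta = toWeakBialgebraStr.piR
  antipode_inner : toWeakBialgebraStr.mu ∘ₗ TensorProduct.map lam
      (toWeakBialgebraStr.mu ∘ₗ TensorProduct.map LinearMap.id lam
        ∘ₗ toWeakBialgebraStr.delta)
      ∘ₗ toWeakBialgebraStr.delta = lam

/-- Convolution product of two linear maps from a "coalgebra" `(X, D)` into an algebra `B`. -/
def convOn {B : Type} [Ring B] [Algebra k B] {X : Type} [AddCommGroup X] [Module k X]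
    (D : X →ₗ[k] X ⊗[k] X) (f g : X →ₗ[k] B) : X →ₗ[k] B :=
  LinearMap.mul' k B ∘ₗ TensorProduct.map f g ∘ₗ D

/-- Tensor product comultiplication. -/
def deltaT {X Y : Type} [AddCommGroup X] [Module k X] [AddCommGroup Y] [Module k Y]
    (dX : X →ₗ[k] X ⊗[k] X) (dY : Y →ₗ[k] Y ⊗[k] Y) :
    X ⊗[k] Y →ₗ[k] (X ⊗[k] Y) ⊗[k] (X ⊗[k] Y) :=
  (tensorTensorTensorComm k X X Y Y).toLinearMap ∘ₗ TensorProduct.map dX dY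

/-- Comultiplication of `H ⊗ H`. -/
def delta2 (W : WeakBialgebraStr k H) :
    H ⊗[k] H →ₗ[k] (H ⊗[k] H) ⊗[k] (H ⊗[k] H) := deltaT W.delta W.delta

/-- Comultiplication of `H ⊗ (H ⊗ H)`. -/
def delta3 (W : WeakBialgebraStr k H) :
    H ⊗[k] (H ⊗[k] H) →ₗ[k]
      (H ⊗[k] (H ⊗[k] H)) ⊗[k] (H ⊗[k] (H ⊗[k] H)) :=
  deltaT W.delta (delta2 W)

/-- Comultiplication of `H ⊗ (H ⊗ (H ⊗ H))`. -/
def delta4 (W : WeakBialgebraStr k H) :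
    H ⊗[k] (H ⊗[k] (H ⊗[k] H)) →ₗ[k]
      (H ⊗[k] (H ⊗[k] (H ⊗[k] H))) ⊗[k] (H ⊗[k] (H ⊗[k] (H ⊗[k] H))) :=
  deltaT W.delta (delta3 W)

/-- Cocommutativity of the coproduct. -/
def Cocomm (W : WeakBialgebraStr k H) : Prop :=
  ∀ x : H, TensorProduct.comm k H H (W.delta x) = W.delta x

variable {B : Type} [Ring B] [Algebra k B]

/-- A measuring of `H` on `B`. -/
def IsMeasuring (W : WeakBialgebraStr k H) (φ : H ⊗[k] B →ₗ[k] B) : Prop :=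
  ∀ (h : H) (b b' : B), φ (h ⊗ₜ[k] (b * b')) =
    LinearMap.mul' k B (TensorProduct.map φ φ
      (tensorTensorTensorComm k H H B B (W.delta h ⊗ₜ[k] (b ⊗ₜ[k] b'))))

/-- `u₁ = φ ∘ (H ⊗ η_B)`. -/
def u1 (φ : H ⊗[k] B →ₗ[k] B) : H →ₗ[k] B := φ ∘ₗ (TensorProduct.mk k H B).flip 1

/-- `u₂ = φ ∘ (μ_H ⊗ η_B)`. -/
def u2 (W : WeakBialgebraStr k H) (φ : H ⊗[k] B →ₗ[k] B) : H ⊗[k] H →ₗ[k] B :=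
  u1 φ ∘ₗ W.mu

/-- Left weak `H`-module algebra. -/
def IsWMA (W : WeakBialgebraStr k H) (φ : H ⊗[k] B →ₗ[k] B) : Prop :=
  IsMeasuring W φ ∧ (∀ b : B, φ (W.one ⊗ₜ[k] b) = b) ∧
    (∀ x y : H, u1 φ (W.mu (x ⊗ₜ[k] y)) = φ (x ⊗ₜ[k] u1 φ y))

/-- Left `H`-module algebra. -/
def IsMA (W : WeakBialgebraStr k H) (φ : H ⊗[k] B →ₗ[k] B) : Prop :=
  IsMeasuring W φ ∧ (∀ b : B, φ (W.one ⊗ₜ[k] b) = b) ∧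
    (∀ (x y : H) (b : B), φ (W.mu (x ⊗ₜ[k] y) ⊗ₜ[k] b) = φ (x ⊗ₜ[k] φ (y ⊗ₜ[k] b)))

/-- `P_{φ} = (φ ⊗ H) ∘ (H ⊗ c) ∘ (δ ⊗ B)`. -/
def Pmap (W : WeakBialgebraStr k H) (φ : H ⊗[k] B →ₗ[k] B) : H ⊗[k] B →ₗ[k] B ⊗[k] H :=
  rTensor H φ ∘ₗ (TensorProduct.assoc k H B H).symm.toLinearMap
    ∘ₗ lTensor H (TensorProduct.comm k H B).toLinearMap
    ∘ₗ (TensorProduct.assoc k H H B).toLinearMap ∘ₗ rTensor B W.delta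

/-- `F_σ = (σ ⊗ μ_H) ∘ δ_{H⊗H}`. -/
def Fmap (W : WeakBialgebraStr k H) (σ : H ⊗[k] H →ₗ[k] B) : H ⊗[k] H →ₗ[k] B ⊗[k] H :=
  TensorProduct.map σ W.mu ∘ₗ delta2 W

/-- `G_σ = (μ_H ⊗ σ) ∘ δ_{H⊗H}`. -/
def Gmap (W : WeakBialgebraStr k H) (σ : H ⊗[k] H →ₗ[k] B) : H ⊗[k] H →ₗ[k] H ⊗[k] B :=
  TensorProduct.map W.mu σ ∘ₗ delta2 W

/-- `∇_{B⊗H} = (μ_B ⊗ H) ∘ (B ⊗ ((u₁ ⊗ H) ∘ δ_H))`. -/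
def nabla (W : WeakBialgebraStr k H) (φ : H ⊗[k] B →ₗ[k] B) : B ⊗[k] H →ₗ[k] B ⊗[k] H :=
  rTensor H (LinearMap.mul' k B) ∘ₗ (TensorProduct.assoc k B B H).symm.toLinearMap
    ∘ₗ lTensor B (rTensor H (u1 φ) ∘ₗ W.delta)

/-- The twisted condition for `σ`. -/
def IsTwisted (W : WeakBialgebraStr k H) (φ : H ⊗[k] B →ₗ[k] B)
    (σ : H ⊗[k] H →ₗ[k] B) : Prop :=
  LinearMap.mul' k B ∘ₗ lTensor B σ ∘ₗ (TensorProduct.assoc k B H H).toLinearMap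
      ∘ₗ rTensor H (Pmap W φ) ∘ₗ (TensorProduct.assoc k H B H).symm.toLinearMap
      ∘ₗ lTensor H (Pmap W φ)
  = LinearMap.mul' k B ∘ₗ lTensor B φ ∘ₗ (TensorProduct.assoc k B H B).toLinearMap
      ∘ₗ rTensor B (Fmap W σ) ∘ₗ (TensorProduct.assoc k H H B).symm.toLinearMap

/-- The 2-cocycle condition for `σ`. -/
def IsCocycle (W : WeakBialgebraStr k H) (φ : H ⊗[k] B →ₗ[k] B)
    (σ : H ⊗[k] H →ₗ[k] B) : Prop :=
  LinearMap.mul' k B ∘ₗ lTensor B σ ∘ₗ (TensorProduct.assoc k B H H).toLinearMap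
      ∘ₗ rTensor H (Pmap W φ) ∘ₗ (TensorProduct.assoc k H B H).symm.toLinearMap
      ∘ₗ lTensor H (Fmap W σ)
  = LinearMap.mul' k B ∘ₗ lTensor B σ ∘ₗ (TensorProduct.assoc k B H H).toLinearMap
      ∘ₗ rTensor H (Fmap W σ) ∘ₗ (TensorProduct.assoc k H H H).symm.toLinearMap

/-- The Hom-product `φ ∧ ψ = φ ∘ (X ⊗ ψ) ∘ (D ⊗ B)`. -/
def wedgeOn {X : Type} [AddCommGroup X] [Module k X]
    (D : X →ₗ[k] X ⊗[k] X) (f g : X ⊗[k] B →ₗ[k] B) : X ⊗[k] B →ₗ[k] B :=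
  f ∘ₗ lTensor X g ∘ₗ (TensorProduct.assoc k X X B).toLinearMap ∘ₗ rTensor B D

/-- `ω̄ = μ_B ∘ (ω ⊗ B)`. -/
def wbar {X : Type} [AddCommGroup X] [Module k X] (ω : X →ₗ[k] B) : X ⊗[k] B →ₗ[k] B :=
  LinearMap.mul' k B ∘ₗ rTensor B ω

/-- `ω̄^{op} = μ_B ∘ c ∘ (ω ⊗ B)`. -/
def wbarOp {X : Type} [AddCommGroup X] [Module k X] (ω : X →ₗ[k] B) : X ⊗[k] B →ₗ[k] B :=
  LinearMap.mul' k B ∘ₗ (TensorProduct.comm k B B).toLinearMap ∘ₗ rTensor B ω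

/-- `(ω, ωi)` is a regular pair with unit `u`. -/
def RegPair {X : Type} [AddCommGroup X] [Module k X]
    (D : X →ₗ[k] X ⊗[k] X) (u ω ωi : X →ₗ[k] B) : Prop :=
  convOn D ω ωi = u ∧ convOn D ωi ω = u ∧
    convOn D (convOn D ω ωi) ω = ω ∧ convOn D (convOn D ωi ω) ωi = ωi

/-- Coface `∂_{2,0}`. -/
def cf20 (φ : H ⊗[k] B →ₗ[k] B) (σ : H ⊗[k] H →ₗ[k] B) :
    H ⊗[k] (H ⊗[k] H) →ₗ[k] B := φ ∘ₗ lTensor H σ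

/-- Coface `∂_{2,1}`. -/
def cf21 (W : WeakBialgebraStr k H) (σ : H ⊗[k] H →ₗ[k] B) :
    H ⊗[k] (H ⊗[k] H) →ₗ[k] B :=
  σ ∘ₗ rTensor H W.mu ∘ₗ (TensorProduct.assoc k H H H).symm.toLinearMap

/-- Coface `∂_{2,2}`. -/
def cf22 (W : WeakBialgebraStr k H) (σ : H ⊗[k] H →ₗ[k] B) :
    H ⊗[k] (H ⊗[k] H) →ₗ[k] B := σ ∘ₗ lTensor H W.mu

/-- Coface `∂_{2,3}`. -/
def cf23 (W : WeakBialgebraStr k H) (σ : H ⊗[k] H →ₗ[k] B) :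
    H ⊗[k] (H ⊗[k] H) →ₗ[k] B :=
  σ ∘ₗ lTensor H (W.mu ∘ₗ lTensor H W.piL)

/-- Coface `∂_{3,0}`. -/
def cf30 (φ : H ⊗[k] B →ₗ[k] B) (f : H ⊗[k] (H ⊗[k] H) →ₗ[k] B) :
    H ⊗[k] (H ⊗[k] (H ⊗[k] H)) →ₗ[k] B := φ ∘ₗ lTensor H f

/-- Coface `∂_{3,1}`. -/
def cf31 (W : WeakBialgebraStr k H) (f : H ⊗[k] (H ⊗[k] H) →ₗ[k] B) :
    H ⊗[k] (H ⊗[k] (H ⊗[k] H)) →ₗ[k] B :=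
  f ∘ₗ rTensor (H ⊗[k] H) W.mu ∘ₗ (TensorProduct.assoc k H H (H ⊗[k] H)).symm.toLinearMap

/-- Coface `∂_{3,2}`. -/
def cf32 (W : WeakBialgebraStr k H) (f : H ⊗[k] (H ⊗[k] H) →ₗ[k] B) :
    H ⊗[k] (H ⊗[k] (H ⊗[k] H)) →ₗ[k] B :=
  f ∘ₗ lTensor H (rTensor H W.mu ∘ₗ (TensorProduct.assoc k H H H).symm.toLinearMap)

/-- Coface `∂_{3,3}`. -/
def cf33 (W : WeakBialgebraStr k H) (f : H ⊗[k] (H ⊗[k] H) →ₗ[k] B) :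
    H ⊗[k] (H ⊗[k] (H ⊗[k] H)) →ₗ[k] B :=
  f ∘ₗ lTensor H (lTensor H W.mu)

/-- Coface `∂_{3,4}`. -/
def cf34 (W : WeakBialgebraStr k H) (f : H ⊗[k] (H ⊗[k] H) →ₗ[k] B) :
    H ⊗[k] (H ⊗[k] (H ⊗[k] H)) →ₗ[k] B :=
  f ∘ₗ lTensor H (lTensor H (W.mu ∘ₗ lTensor H W.piL))

/-- The pre-obstruction `ω_σ = ∂₂₀(σ) ∗ ∂₂₂(σ) ∗ ∂₂₁(σ⁻¹) ∗ ∂₂₃(σ⁻¹)`. -/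
def preObs (W : WeakBialgebraStr k H) (φ : H ⊗[k] B →ₗ[k] B)
    (σ σi : H ⊗[k] H →ₗ[k] B) : H ⊗[k] (H ⊗[k] H) →ₗ[k] B :=
  convOn (delta3 W)
    (convOn (delta3 W) (convOn (delta3 W) (cf20 φ σ) (cf22 W σ)) (cf21 W σi))
    (cf23 W σi)

/-- Bundled `k`-modules (to form iterated tensor powers). -/
structure ModB (k : Type) [CommRing k] : Type 1 where
  carrier : Type
  [acg : AddCommGroup carrier]
  [mod : Module k carrier]

attribute [instance] ModB.acg ModB.mod

/-- Tensor powers `H^{⊗(n+1)}`. -/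
def HpowM (k : Type) [CommRing k] (H : Type) [AddCommGroup H] [Module k H] : ℕ → ModB k
  | 0 => ⟨H⟩
  | n + 1 => ⟨H ⊗[k] (HpowM k H n).carrier⟩

/-- Comultiplication of `H^{⊗(n+1)}`. -/
def deltaPow (W : WeakBialgebraStr k H) : (n : ℕ) →
    ((HpowM k H n).carrier →ₗ[k] (HpowM k H n).carrier ⊗[k] (HpowM k H n).carrier)
  | 0 => W.delta
  | n + 1 => deltaT W.delta (deltaPow W n)

/-- Iterated multiplication `m : H^{⊗(n+1)} → H`. -/
def mPow (W : WeakBialgebraStr k H) : (n : ℕ) → ((HpowM k H n).carrier →ₗ[k] H)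
  | 0 => LinearMap.id
  | n + 1 => W.mu ∘ₗ lTensor H (mPow W n)

/-- Iterated action `φ^{⊗(n+1)} : H^{⊗(n+1)} ⊗ B → B`. -/
def phiPow (φ : H ⊗[k] B →ₗ[k] B) : (n : ℕ) →
    ((HpowM k H n).carrier ⊗[k] B →ₗ[k] B)
  | 0 => φ
  | n + 1 => φ ∘ₗ lTensor H (phiPow φ n)
      ∘ₗ (TensorProduct.assoc k H (HpowM k H n).carrier B).toLinearMap

/-- `u_{n+1} = u₁ ∘ m^{⊗(n+1)}`. -/
def uPow (W : WeakBialgebraStr k H) (φ : H ⊗[k] B →ₗ[k] B) (n : ℕ) :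
    (HpowM k H n).carrier →ₗ[k] B := u1 φ ∘ₗ mPow W n

end WK
namespace WK11
open WK TensorProduct LinearMap

variable {k : Type} [CommRing k] {H : Type} [AddCommGroup H] [Module k H]
    {B : Type} [Ring B] [Algebra k B]

/-- product tree combinator: `mulT f g (x ⊗ y) = f x * g y`. -/
noncomputable def mulT {M N : Type} [AddCommGroup M] [Module k M] [AddCommGroup N] [Module k N]
    (f : M →ₗ[k] B) (g : N →ₗ[k] B) : M ⊗[k] N →ₗ[k] B :=
  LinearMap.mul' k B ∘ₗ TensorProduct.map f g

@[simp] lemma mulT_tmul {M N : Type} [AddCommGroup M] [Module k M] [AddCommGroup N] [Module k N]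
    (f : M →ₗ[k] B) (g : N →ₗ[k] B) (x : M) (y : N) :
    mulT f g (x ⊗ₜ[k] y) = f x * g y := rfl

/-- `phiR φ b h = φ (h ⊗ b)`. -/
noncomputable def phiR (φ : H ⊗[k] B →ₗ[k] B) (b : B) : H →ₗ[k] B :=
  φ ∘ₗ (TensorProduct.mk k H B).flip b

@[simp] lemma phiR_apply (φ : H ⊗[k] B →ₗ[k] B) (b : B) (h : H) :
    phiR φ b h = φ (h ⊗ₜ[k] b) := rfl

lemma u1_eq_phiR (φ : H ⊗[k] B →ₗ[k] B) : u1 φ = phiR φ 1 := rfl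

variable (W : WeakHopfStr k H)

/-- scalar factor `epsF W h a = algebraMap (ε (a ⬝ h))`. -/
noncomputable def epsF (h : H) : H →ₗ[k] B :=
  Algebra.linearMap k B ∘ₗ W.epsmu ∘ₗ (TensorProduct.mk k H H).flip h

@[simp] lemma epsF_apply (h a : H) :
    epsF (B := B) W h a = algebraMap k B (W.eps (W.mu (a ⊗ₜ[k] h))) := rfl

/-- scalar factor, right version: `epsFr W h a = algebraMap (ε (h ⬝ a))`. -/
noncomputable def epsFr (h : H) : H →ₗ[k] B :=
  Algebra.linearMap k B ∘ₗ W.epsmu ∘ₗ (TensorProduct.mk k H H) h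

@[simp] lemma epsFr_apply (h a : H) :
    epsFr (B := B) W h a = algebraMap k B (W.eps (W.mu (h ⊗ₜ[k] a))) := rfl

section Coalg

/-- cocommutativity as a map identity. -/
lemma ccM (hco : Cocomm W.toWeakBialgebraStr) : (TensorProduct.comm k H H).toLinearMap ∘ₗ W.delta = W.delta :=
  LinearMap.ext hco

/-- coassociativity as a map identity (right-nested form). -/
lemma coM : lTensor H W.delta ∘ₗ W.delta
    = (TensorProduct.assoc k H H H).toLinearMap ∘ₗ rTensor H W.delta ∘ₗ W.delta := by
  apply LinearMap.ext; intro x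
  simp [W.coassoc x]

/-- `Δ(1)Δ(h) = Δ(h)`. -/
lemma deltaOneMul (h : H) :
    TensorProduct.map W.mu W.mu
      (tensorTensorTensorComm k H H H H (W.delta W.one ⊗ₜ[k] W.delta h)) = W.delta h := by
  rw [← W.a1]; rw [W.one_mul']

/-- `Δ(h)Δ(1) = Δ(h)`. -/
lemma deltaMulOne (h : H) :
    TensorProduct.map W.mu W.mu
      (tensorTensorTensorComm k H H H H (W.delta h ⊗ₜ[k] W.delta W.one)) = W.delta h := by
  rw [← W.a1]; rw [W.mul_one']

/-- the shuffle appearing in the right-nested form of a3': `(a⊗b)⊗(c⊗d) ↦ a ⊗ ((c⬝b) ⊗ d)`. -/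
noncomputable def sh1 : (H ⊗[k] H) ⊗[k] (H ⊗[k] H) →ₗ[k] H ⊗[k] (H ⊗[k] H) :=
  (TensorProduct.assoc k H H H).toLinearMap
    ∘ₗ rTensor H (lTensor H (W.mu ∘ₗ (TensorProduct.comm k H H).toLinearMap)
        ∘ₗ (TensorProduct.assoc k H H H).toLinearMap)
    ∘ₗ (TensorProduct.assoc k (H ⊗[k] H) H H).symm.toLinearMap

@[simp] lemma sh1_tmul (a b c d : H) :
    sh1 (k := k) W ((a ⊗ₜ[k] b) ⊗ₜ[k] (c ⊗ₜ[k] d))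
      = a ⊗ₜ[k] ((W.mu (c ⊗ₜ[k] b)) ⊗ₜ[k] d) := by
  simp [sh1]

/-- the shuffle appearing in the right-nested form of a3: `(a⊗b)⊗(c⊗d) ↦ a ⊗ ((b⬝c) ⊗ d)`. -/
noncomputable def sh0 : (H ⊗[k] H) ⊗[k] (H ⊗[k] H) →ₗ[k] H ⊗[k] (H ⊗[k] H) :=
  (TensorProduct.assoc k H H H).toLinearMap
    ∘ₗ rTensor H (lTensor H W.mu ∘ₗ (TensorProduct.assoc k H H H).toLinearMap)
    ∘ₗ (TensorProduct.assoc k (H ⊗[k] H) H H).symm.toLinearMap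

@[simp] lemma sh0_tmul (a b c d : H) :
    sh0 (k := k) W ((a ⊗ₜ[k] b) ⊗ₜ[k] (c ⊗ₜ[k] d))
      = a ⊗ₜ[k] ((W.mu (b ⊗ₜ[k] c)) ⊗ₜ[k] d) := by
  simp [sh0]

/-- a3' in right-nested usable form. -/
lemma a3'R : lTensor H W.delta (W.delta W.one)
    = sh1 (k := k) W (W.delta W.one ⊗ₜ[k] W.delta W.one) := by
  have h1 : lTensor H W.delta (W.delta W.one)
      = (TensorProduct.assoc k H H H) (rTensor H W.delta (W.delta W.one)) := by
    rw [W.coassoc]; simp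
  rw [h1, W.a3']
  rfl

/-- a3 in right-nested usable form. -/
lemma a3R : lTensor H W.delta (W.delta W.one)
    = sh0 (k := k) W (W.delta W.one ⊗ₜ[k] W.delta W.one) := by
  have h1 : lTensor H W.delta (W.delta W.one)
      = (TensorProduct.assoc k H H H) (rTensor H W.delta (W.delta W.one)) := by
    rw [W.coassoc]; simp
  rw [h1, W.a3]
  rfl

end Coalg

end WK11
namespace WK11
open WK TensorProduct LinearMap

variable {k : Type} [CommRing k] {H : Type} [AddCommGroup H] [Module k H]
    {B : Type} [Ring B] [Algebra k B]
variable (W : WeakHopfStr k H) (φ : H ⊗[k] B →ₗ[k] B)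

/-- measuring, in `mulT` form. -/
lemma measT (hm : IsMeasuring W.toWeakBialgebraStr φ) (h : H) (b b' : B) :
    φ (h ⊗ₜ[k] (b * b')) = mulT (phiR φ b) (phiR φ b') (W.delta h) := by
  rw [hm h b b']
  generalize W.delta h = t
  induction t using TensorProduct.induction_on with
  | zero => simp
  | tmul x y => simp
  | add x y hx hy => simp only [add_tmul, map_add, hx, hy]

lemma W2l (hφ : IsWMA W.toWeakBialgebraStr φ) (h : H) (b : B) :
    mulT (u1 φ) (phiR φ b) (W.delta h) = φ (h ⊗ₜ[k] b) := by
  have := measT W φ hφ.1 h 1 b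
  rw [one_mul] at this
  rw [u1_eq_phiR, ← this]

lemma W2r (hφ : IsWMA W.toWeakBialgebraStr φ) (h : H) (b : B) :
    mulT (phiR φ b) (u1 φ) (W.delta h) = φ (h ⊗ₜ[k] b) := by
  have := measT W φ hφ.1 h b 1
  rw [mul_one] at this
  rw [u1_eq_phiR, ← this]

/-- the merging lemma at `1`. -/
lemma merge1 (hφ : IsWMA W.toWeakBialgebraStr φ) (b b' : B) :
    mulT (phiR φ b) (phiR φ b') (W.delta W.one) = b * b' := by
  rw [← measT W φ hφ.1 W.one b b']
  exact hφ.2.1 _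

/-- `φ(Π^L(h) ⊗ b)` in `mulT` form. -/
lemma phi_piL_bridge (h : H) (b : B) :
    φ (W.toWeakBialgebraStr.piL h ⊗ₜ[k] b)
      = mulT (epsF W h) (phiR φ b) (W.delta W.one) := by
  have key : ∀ t : H ⊗[k] H,
      φ ((TensorProduct.lid k H).toLinearMap
          (rTensor H W.toWeakBialgebraStr.epsmu
            ((TensorProduct.assoc k H H H).symm.toLinearMap
              (lTensor H (TensorProduct.comm k H H).toLinearMap
                ((TensorProduct.assoc k H H H).toLinearMap (t ⊗ₜ[k] h))))) ⊗ₜ[k] b)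
        = mulT (epsF W h) (phiR φ b) t := by
    intro t
    induction t using TensorProduct.induction_on with
    | zero => simp
    | tmul x y =>
        simp only [assoc_tmul, lTensor_tmul, comm_tmul, assoc_symm_tmul, rTensor_tmul,
          LinearEquiv.coe_coe, lid_tmul, WeakBialgebraStr.epsmu, comp_apply]
        rw [← TensorProduct.smul_tmul', map_smul, Algebra.smul_def]
        simp [mulT, WeakBialgebraStr.epsmu]
    | add x y hx hy => simp only [add_tmul, map_add, tmul_add, add_mul, hx, hy]
  simpa [WeakBialgebraStr.piL] using key (W.delta W.one)

lemma u1_piL_bridge (h : H) :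
    u1 φ (W.toWeakBialgebraStr.piL h) = mulT (epsF W h) (u1 φ) (W.delta W.one) := by
  have := phi_piL_bridge W φ h 1
  rwa [u1_eq_phiR]

/-- LemΠ-L : `φ(Π^L(h) ⊗ b) = u1(Π^L(h)) * b`. -/
lemma piL_act_left (hφ : IsWMA W.toWeakBialgebraStr φ) (h : H) (b : B) :
    φ (W.toWeakBialgebraStr.piL h ⊗ₜ[k] b) = u1 φ (W.toWeakBialgebraStr.piL h) * b := by
  rw [phi_piL_bridge, u1_piL_bridge]
  have step2 : mulT (epsF W h) (phiR φ b)
      = mulT (epsF W h) (mulT (u1 φ) (phiR φ b)) ∘ₗ lTensor H W.delta := by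
    apply TensorProduct.ext'
    intro x y
    simp [W2l W φ hφ]
  rw [LinearMap.congr_fun step2 (W.delta W.one)]
  simp only [comp_apply]
  rw [a3'R]
  have key : ∀ t : H ⊗[k] H,
      mulT (epsF W h) (mulT (u1 φ) (phiR φ b)) (sh1 W (t ⊗ₜ[k] W.delta W.one))
        = mulT (epsF W h) (mulRight k b ∘ₗ u1 φ) t := by
    intro t
    induction t using TensorProduct.induction_on with
    | zero => simp
    | tmul a b' =>
        have inner : ∀ s : H ⊗[k] H,
            mulT (epsF W h) (mulT (u1 φ) (phiR φ b)) (sh1 W ((a ⊗ₜ[k] b') ⊗ₜ[k] s))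
              = algebraMap k B (W.eps (W.mu (a ⊗ₜ[k] h)))
                  * mulT (phiR φ (u1 φ b')) (phiR φ b) s := by
          intro s
          induction s using TensorProduct.induction_on with
          | zero => simp
          | tmul c d => simp [hφ.2.2 c b']
          | add s1 s2 h1 h2 => simp only [tmul_add, map_add, mul_add, h1, h2]
        rw [inner (W.delta W.one), merge1 W φ hφ]
        simp [mul_assoc]
    | add t1 t2 h1 h2 => simp only [add_tmul, map_add, h1, h2]
  rw [key (W.delta W.one)]
  generalize W.delta W.one = t
  induction t using TensorProduct.induction_on with
  | zero => simp
  | tmul a c => simp [mul_assoc]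
  | add t1 t2 h1 h2 => simp only [map_add, add_mul, h1, h2]

end WK11
namespace WK11
open WK TensorProduct LinearMap

variable {k : Type} [CommRing k] {H : Type} [AddCommGroup H] [Module k H]
    {B : Type} [Ring B] [Algebra k B]
variable (W : WeakHopfStr k H) (φ : H ⊗[k] B →ₗ[k] B)

/-- `mulT` composition helpers. -/
lemma mulT_comp_l {M N N' : Type} [AddCommGroup M] [Module k M] [AddCommGroup N] [Module k N]
    [AddCommGroup N'] [Module k N'] (f : M →ₗ[k] B) (g : N' →ₗ[k] B) (h : N →ₗ[k] N') :
    mulT f (g ∘ₗ h) = mulT f g ∘ₗ lTensor M h := by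
  apply TensorProduct.ext'; intro x y; simp

lemma mulT_comp_r {M M' N : Type} [AddCommGroup M] [Module k M] [AddCommGroup N] [Module k N]
    [AddCommGroup M'] [Module k M'] (f : M' →ₗ[k] B) (g : N →ₗ[k] B) (h : M →ₗ[k] M') :
    mulT (f ∘ₗ h) g = mulT f g ∘ₗ rTensor N h := by
  apply TensorProduct.ext'; intro x y; simp

/-- The 3-cycle on `H ⊗ (H ⊗ H)` : `x⊗(y⊗z) ↦ y⊗(z⊗x)`. -/
noncomputable def cycM : H ⊗[k] (H ⊗[k] H) →ₗ[k] H ⊗[k] (H ⊗[k] H) :=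
  lTensor H (TensorProduct.comm k H H).toLinearMap
    ∘ₗ (TensorProduct.assoc k H H H).toLinearMap
    ∘ₗ rTensor H (TensorProduct.comm k H H).toLinearMap
    ∘ₗ (TensorProduct.assoc k H H H).symm.toLinearMap

@[simp] lemma cycM_tmul (x y z : H) :
    cycM (k := k) (x ⊗ₜ[k] (y ⊗ₜ[k] z)) = y ⊗ₜ[k] (z ⊗ₜ[k] x) := by
  simp [cycM]

lemma cyc_delta (hco : Cocomm W.toWeakBialgebraStr) (x : H) :
    cycM (lTensor H W.delta (W.delta x)) = lTensor H W.delta (W.delta x) := by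
  have hco1 : lTensor H W.delta (W.delta x)
      = (TensorProduct.assoc k H H H) (rTensor H W.delta (W.delta x)) := by
    rw [W.coassoc]; simp
  rw [hco1]
  simp only [cycM, comp_apply, LinearEquiv.coe_coe, LinearEquiv.symm_apply_apply]
  rw [← rTensor_comp_apply, ccM W hco]
  rw [← hco1, ← lTensor_comp_apply, ccM W hco]

/-- mirror of LemΠ-L : `φ(Π^L(h) ⊗ b) = b * u1(Π^L(h))`. -/
lemma piL_act_right (hφ : IsWMA W.toWeakBialgebraStr φ) (hco : Cocomm W.toWeakBialgebraStr)
    (h : H) (b : B) :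
    φ (W.toWeakBialgebraStr.piL h ⊗ₜ[k] b) = b * u1 φ (W.toWeakBialgebraStr.piL h) := by
  rw [phi_piL_bridge, u1_piL_bridge]
  have step2 : mulT (epsF W h) (phiR φ b)
      = mulT (epsF W h) (mulT (phiR φ b) (u1 φ)) ∘ₗ lTensor H W.delta := by
    apply TensorProduct.ext'
    intro x y
    simp [W2r W φ hφ]
  rw [LinearMap.congr_fun step2 (W.delta W.one)]
  simp only [comp_apply]
  -- switch to the cycled functional
  have cswitch : mulT (epsF W h) (mulT (phiR φ b) (u1 φ))
      = mulT (phiR φ b) (mulT (u1 φ) (epsF W h)) ∘ₗ cycM := by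
    apply TensorProduct.ext'
    intro x t
    induction t using TensorProduct.induction_on with
    | zero => simp
    | tmul y z =>
        simp only [mulT_tmul, cycM_tmul, comp_apply, epsF_apply]
        rw [← mul_assoc, Algebra.commutes, mul_assoc, Algebra.commutes]
    | add t1 t2 h1 h2 => simp only [tmul_add, map_add, mul_add, h1, h2]
  rw [LinearMap.congr_fun cswitch (lTensor H W.delta (W.delta W.one))]
  simp only [comp_apply]
  rw [cyc_delta W hco, a3R]
  have key : ∀ s : H ⊗[k] H,
      mulT (phiR φ b) (mulT (u1 φ) (epsF W h)) (sh0 W (W.delta W.one ⊗ₜ[k] s))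
        = b * mulT (u1 φ) (epsF W h) s := by
    intro s
    induction s using TensorProduct.induction_on with
    | zero => simp
    | tmul c d =>
        have inner : ∀ t : H ⊗[k] H,
            mulT (phiR φ b) (mulT (u1 φ) (epsF W h)) (sh0 W (t ⊗ₜ[k] (c ⊗ₜ[k] d)))
              = mulT (phiR φ b) (phiR φ (u1 φ c)) t
                  * algebraMap k B (W.eps (W.mu (d ⊗ₜ[k] h))) := by
          intro t
          induction t using TensorProduct.induction_on with
          | zero => simp
          | tmul a b' => simp [hφ.2.2 b' c, mul_assoc]
          | add t1 t2 h1 h2 => simp only [add_tmul, map_add, add_mul, h1, h2]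
        rw [inner (W.delta W.one), merge1 W φ hφ]
        simp [mul_assoc]
    | add s1 s2 h1 h2 => simp only [tmul_add, map_add, mul_add, h1, h2]
  rw [key (W.delta W.one)]
  -- finally swap the two legs over `Δ(1)`
  have fswap : mulT (u1 φ) (epsF W h)
      = mulT (epsF W h) (u1 φ) ∘ₗ (TensorProduct.comm k H H).toLinearMap := by
    apply TensorProduct.ext'
    intro x y
    simp only [mulT_tmul, comm_tmul, comp_apply, LinearEquiv.coe_coe, epsF_apply]
    rw [Algebra.commutes]
  rw [LinearMap.congr_fun fswap (W.delta W.one)]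
  simp only [comp_apply, LinearEquiv.coe_coe]
  rw [hco W.one]

/-- `e`-values are central. -/
lemma e_central (hφ : IsWMA W.toWeakBialgebraStr φ) (hco : Cocomm W.toWeakBialgebraStr)
    (h : H) (b : B) :
    u1 φ (W.toWeakBialgebraStr.piL h) * b = b * u1 φ (W.toWeakBialgebraStr.piL h) := by
  rw [← piL_act_left W φ hφ, piL_act_right W φ hφ hco]

end WK11
namespace WK11
open WK TensorProduct LinearMap

variable {k : Type} [CommRing k] {H : Type} [AddCommGroup H] [Module k H]
    {B : Type} [Ring B] [Algebra k B]
variable (W : WeakHopfStr k H) (φ : H ⊗[k] B →ₗ[k] B)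

/-- the target map contraction `PLC ((x⊗y)⊗h) = ε(x⬝h) • y`. -/
noncomputable def PLC : (H ⊗[k] H) ⊗[k] H →ₗ[k] H :=
  (TensorProduct.lid k H).toLinearMap ∘ₗ rTensor H W.toWeakBialgebraStr.epsmu
    ∘ₗ (TensorProduct.assoc k H H H).symm.toLinearMap
    ∘ₗ lTensor H (TensorProduct.comm k H H).toLinearMap
    ∘ₗ (TensorProduct.assoc k H H H).toLinearMap

@[simp] lemma PLC_tmul (x y h : H) :
    PLC (k := k) W ((x ⊗ₜ[k] y) ⊗ₜ[k] h) = W.eps (W.mu (x ⊗ₜ[k] h)) • y := by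
  simp [PLC, WeakBialgebraStr.epsmu]

lemma piL_eq (h : H) :
    W.toWeakBialgebraStr.piL h = PLC W (W.delta W.one ⊗ₜ[k] h) := rfl

/-- the source map contraction `PRC ((x⊗y)⊗h) = ε(h⬝y) • x`. -/
noncomputable def PRC : (H ⊗[k] H) ⊗[k] H →ₗ[k] H :=
  (TensorProduct.rid k H).toLinearMap ∘ₗ lTensor H W.toWeakBialgebraStr.epsmu
    ∘ₗ lTensor H (TensorProduct.comm k H H).toLinearMap
    ∘ₗ (TensorProduct.assoc k H H H).toLinearMap

@[simp] lemma PRC_tmul (x y h : H) :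
    PRC (k := k) W ((x ⊗ₜ[k] y) ⊗ₜ[k] h) = W.eps (W.mu (h ⊗ₜ[k] y)) • x := by
  simp [PRC, WeakBialgebraStr.epsmu]

lemma piR_eq (h : H) :
    W.toWeakBialgebraStr.piR h = PRC W (W.delta W.one ⊗ₜ[k] h) := rfl

/-- `Π^L(h₁) ⬝ h₂ = h`. -/
lemma A4L (h : H) :
    W.mu (TensorProduct.map W.toWeakBialgebraStr.piL LinearMap.id (W.delta h)) = h := by
  have key : ∀ s : H ⊗[k] H,
      W.mu (TensorProduct.map W.toWeakBialgebraStr.piL LinearMap.id s)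
        = TensorProduct.lid k H (rTensor H W.eps (TensorProduct.map W.mu W.mu
            (tensorTensorTensorComm k H H H H (W.delta W.one ⊗ₜ[k] s)))) := by
    intro s
    induction s using TensorProduct.induction_on with
    | zero => simp
    | tmul a c =>
        simp only [TensorProduct.map_tmul, LinearMap.id_coe, id_eq]
        rw [piL_eq]
        have inner : ∀ t : H ⊗[k] H,
            W.mu (PLC W (t ⊗ₜ[k] a) ⊗ₜ[k] c)
              = TensorProduct.lid k H (rTensor H W.eps (TensorProduct.map W.mu W.mu
                  (tensorTensorTensorComm k H H H H (t ⊗ₜ[k] (a ⊗ₜ[k] c))))) := by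
          intro t
          induction t using TensorProduct.induction_on with
          | zero => simp
          | tmul x y =>
              simp only [PLC_tmul, tensorTensorTensorComm_tmul, TensorProduct.map_tmul,
                rTensor_tmul, LinearEquiv.coe_coe, lid_tmul]
              rw [← TensorProduct.smul_tmul', map_smul]
          | add t1 t2 h1 h2 => simp only [add_tmul, map_add, h1, h2]
        exact inner (W.delta W.one)
    | add s1 s2 h1 h2 => simp only [tmul_add, map_add, h1, h2]
  rw [key (W.delta h), deltaOneMul]
  exact W.counit_l h

/-- `h₁ ⬝ Π^R(h₂) = h`. -/
lemma A4R (h : H) :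
    W.mu (TensorProduct.map LinearMap.id W.toWeakBialgebraStr.piR (W.delta h)) = h := by
  have key : ∀ s : H ⊗[k] H,
      W.mu (TensorProduct.map LinearMap.id W.toWeakBialgebraStr.piR s)
        = TensorProduct.rid k H (lTensor H W.eps (TensorProduct.map W.mu W.mu
            (tensorTensorTensorComm k H H H H (s ⊗ₜ[k] W.delta W.one)))) := by
    intro s
    induction s using TensorProduct.induction_on with
    | zero => simp
    | tmul a c =>
        simp only [TensorProduct.map_tmul, LinearMap.id_coe, id_eq]
        rw [piR_eq]
        have inner : ∀ t : H ⊗[k] H,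
            W.mu (a ⊗ₜ[k] PRC W (t ⊗ₜ[k] c))
              = TensorProduct.rid k H (lTensor H W.eps (TensorProduct.map W.mu W.mu
                  (tensorTensorTensorComm k H H H H ((a ⊗ₜ[k] c) ⊗ₜ[k] t)))) := by
          intro t
          induction t using TensorProduct.induction_on with
          | zero => simp
          | tmul x y => simp [tmul_smul]
          | add t1 t2 h1 h2 => simp only [add_tmul, tmul_add, map_add, h1, h2]
        exact inner (W.delta W.one)
    | add s1 s2 h1 h2 => simp only [add_tmul, map_add, h1, h2]
  rw [key (W.delta h), deltaMulOne]
  exact W.counit_r h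

/-- the WMA axiom as a map identity. -/
lemma wmaM (hφ : IsWMA W.toWeakBialgebraStr φ) :
    φ ∘ₗ TensorProduct.map LinearMap.id (u1 φ) = u1 φ ∘ₗ W.mu := by
  apply TensorProduct.ext'; intro x y
  simp [(hφ.2.2 x y).symm]

/-- STEP 5 : `u1 ∗ e = e`. -/
lemma u1_conv_e (hφ : IsWMA W.toWeakBialgebraStr φ) (x : H) :
    mulT (u1 φ) (u1 φ ∘ₗ W.toWeakBialgebraStr.piL) (W.delta x)
      = u1 φ (W.toWeakBialgebraStr.piL x) := by
  have hr : W.mu ∘ₗ TensorProduct.map LinearMap.id W.lam ∘ₗ W.delta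
      = W.toWeakBialgebraStr.piL := W.antipode_r
  have hG : u1 φ ∘ₗ W.toWeakBialgebraStr.piL
      = (u1 φ ∘ₗ W.mu ∘ₗ TensorProduct.map LinearMap.id W.lam) ∘ₗ W.delta := by
    rw [← hr]; rfl
  rw [hG, mulT_comp_l]
  simp only [comp_apply]
  have hco1 : lTensor H W.delta (W.delta x)
      = (TensorProduct.assoc k H H H) (rTensor H W.delta (W.delta x)) := by
    rw [W.coassoc]; simp
  rw [hco1]
  have key : ∀ t : H ⊗[k] H,
      mulT (u1 φ) (u1 φ ∘ₗ W.mu ∘ₗ TensorProduct.map LinearMap.id W.lam)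
          ((TensorProduct.assoc k H H H) (rTensor H W.delta t))
        = (φ ∘ₗ TensorProduct.map LinearMap.id (u1 φ ∘ₗ W.lam)) t := by
    intro t
    induction t using TensorProduct.induction_on with
    | zero => simp
    | tmul y c =>
        have inner : ∀ s : H ⊗[k] H,
            mulT (u1 φ) (u1 φ ∘ₗ W.mu ∘ₗ TensorProduct.map LinearMap.id W.lam)
                ((TensorProduct.assoc k H H H) (s ⊗ₜ[k] c))
              = mulT (u1 φ) (phiR φ (u1 φ (W.lam c))) s := by
          intro s
          induction s using TensorProduct.induction_on with
          | zero => simp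
          | tmul p q => simp [hφ.2.2 q (W.lam c)]
          | add s1 s2 h1 h2 => simp only [add_tmul, map_add, h1, h2]
        rw [rTensor_tmul, inner (W.delta y), W2l W φ hφ]
        simp
    | add t1 t2 h1 h2 => simp only [map_add, h1, h2]
  rw [key (W.delta x)]
  have final : φ ∘ₗ TensorProduct.map LinearMap.id (u1 φ ∘ₗ W.lam)
      = u1 φ ∘ₗ W.mu ∘ₗ TensorProduct.map LinearMap.id W.lam := by
    apply TensorProduct.ext'; intro a c
    simp [(hφ.2.2 a (W.lam c)).symm]
  rw [LinearMap.congr_fun final (W.delta x)]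
  have : (u1 φ ∘ₗ W.mu ∘ₗ TensorProduct.map LinearMap.id W.lam) (W.delta x)
      = u1 φ ((W.mu ∘ₗ TensorProduct.map LinearMap.id W.lam ∘ₗ W.delta) x) := rfl
  rw [this, hr]

/-- STEP 6 : `u1 = u1 ∘ Π^L`. -/
lemma u1_eq_e (hφ : IsWMA W.toWeakBialgebraStr φ) (hco : Cocomm W.toWeakBialgebraStr) (x : H) :
    u1 φ x = u1 φ (W.toWeakBialgebraStr.piL x) := by
  conv_lhs => rw [← A4L W x]
  have key : u1 φ ∘ₗ W.mu ∘ₗ TensorProduct.map W.toWeakBialgebraStr.piL LinearMap.id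
      = mulT (u1 φ) (u1 φ ∘ₗ W.toWeakBialgebraStr.piL)
          ∘ₗ (TensorProduct.comm k H H).toLinearMap := by
    apply TensorProduct.ext'; intro a c
    simp only [comp_apply, TensorProduct.map_tmul, LinearEquiv.coe_coe, comm_tmul, mulT_tmul,
      LinearMap.id_coe, id_eq]
    rw [hφ.2.2 (W.toWeakBialgebraStr.piL a) c, piL_act_left W φ hφ,
      e_central W φ hφ hco]
  have lhs_eq : u1 φ (W.mu (TensorProduct.map W.toWeakBialgebraStr.piL LinearMap.id
      (W.delta x)))
      = (u1 φ ∘ₗ W.mu ∘ₗ TensorProduct.map W.toWeakBialgebraStr.piL LinearMap.id)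
          (W.delta x) := rfl
  rw [lhs_eq, LinearMap.congr_fun key (W.delta x)]
  simp only [comp_apply, LinearEquiv.coe_coe]
  rw [hco x, u1_conv_e W φ hφ]

end WK11
namespace WK11
open WK TensorProduct LinearMap

variable {k : Type} [CommRing k] {H : Type} [AddCommGroup H] [Module k H]
    {B : Type} [Ring B] [Algebra k B]
variable (W : WeakHopfStr k H)

/-- contraction `C9 ((x⊗y)⊗(a⊗b)) = ε(y⬝b) • (x⬝a)`. -/
noncomputable def C9 : (H ⊗[k] H) ⊗[k] (H ⊗[k] H) →ₗ[k] H :=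
  (TensorProduct.rid k H).toLinearMap ∘ₗ TensorProduct.map W.mu W.toWeakBialgebraStr.epsmu
    ∘ₗ (tensorTensorTensorComm k H H H H).toLinearMap

@[simp] lemma C9_tmul (x y a b : H) :
    C9 (k := k) W ((x ⊗ₜ[k] y) ⊗ₜ[k] (a ⊗ₜ[k] b))
      = W.eps (W.mu (y ⊗ₜ[k] b)) • W.mu (x ⊗ₜ[k] a) := by
  simp [C9, WeakBialgebraStr.epsmu]

/-- contraction `C9L ((x⊗y)⊗(a⊗b)) = ε(x⬝a) • (y⬝b)`. -/
noncomputable def C9L : (H ⊗[k] H) ⊗[k] (H ⊗[k] H) →ₗ[k] H :=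
  (TensorProduct.lid k H).toLinearMap ∘ₗ TensorProduct.map W.toWeakBialgebraStr.epsmu W.mu
    ∘ₗ (tensorTensorTensorComm k H H H H).toLinearMap

@[simp] lemma C9L_tmul (x y a b : H) :
    C9L (k := k) W ((x ⊗ₜ[k] y) ⊗ₜ[k] (a ⊗ₜ[k] b))
      = W.eps (W.mu (x ⊗ₜ[k] a)) • W.mu (y ⊗ₜ[k] b) := by
  simp [C9L, WeakBialgebraStr.epsmu]

lemma contract1 (p q : H) :
    C9 (k := k) W (W.delta p ⊗ₜ[k] W.delta q) = W.mu (p ⊗ₜ[k] q) := by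
  have key : ∀ (T S : H ⊗[k] H),
      C9 (k := k) W (T ⊗ₜ[k] S)
        = TensorProduct.rid k H (lTensor H W.eps (TensorProduct.map W.mu W.mu
            (tensorTensorTensorComm k H H H H (T ⊗ₜ[k] S)))) := by
    intro T S
    induction T using TensorProduct.induction_on with
    | zero => simp
    | tmul x y =>
        induction S using TensorProduct.induction_on with
        | zero => simp
        | tmul a b => simp [WeakBialgebraStr.epsmu]
        | add s1 s2 h1 h2 => simp only [add_tmul, tmul_add, map_add, h1, h2]
    | add t1 t2 h1 h2 => simp only [add_tmul, tmul_add, map_add, h1, h2]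
  rw [key, ← W.a1]
  exact W.counit_r _

lemma contract1L (p q : H) :
    C9L (k := k) W (W.delta p ⊗ₜ[k] W.delta q) = W.mu (p ⊗ₜ[k] q) := by
  have key : ∀ (T S : H ⊗[k] H),
      C9L (k := k) W (T ⊗ₜ[k] S)
        = TensorProduct.lid k H (rTensor H W.eps (TensorProduct.map W.mu W.mu
            (tensorTensorTensorComm k H H H H (T ⊗ₜ[k] S)))) := by
    intro T S
    induction T using TensorProduct.induction_on with
    | zero => simp
    | tmul x y =>
        induction S using TensorProduct.induction_on with
        | zero => simp
        | tmul a b => simp [WeakBialgebraStr.epsmu]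
        | add s1 s2 h1 h2 => simp only [add_tmul, tmul_add, map_add, h1, h2]
    | add t1 t2 h1 h2 => simp only [add_tmul, tmul_add, map_add, h1, h2]
  rw [key, ← W.a1]
  exact W.counit_l _

/-- `G5 ((x⊗(y⊗z))⊗(a⊗b)) = ε(y⬝b) • ((x⬝a) ⊗ z)`. -/
noncomputable def G5 : (H ⊗[k] (H ⊗[k] H)) ⊗[k] (H ⊗[k] H) →ₗ[k] H ⊗[k] H :=
  rTensor H (C9 W) ∘ₗ (TensorProduct.assoc k (H ⊗[k] H) (H ⊗[k] H) H).symm.toLinearMap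
    ∘ₗ lTensor (H ⊗[k] H) (TensorProduct.comm k H (H ⊗[k] H)).toLinearMap
    ∘ₗ (TensorProduct.assoc k (H ⊗[k] H) H (H ⊗[k] H)).toLinearMap
    ∘ₗ rTensor (H ⊗[k] H) (TensorProduct.assoc k H H H).symm.toLinearMap

@[simp] lemma G5_tmul (x y z a b : H) :
    G5 (k := k) W ((x ⊗ₜ[k] (y ⊗ₜ[k] z)) ⊗ₜ[k] (a ⊗ₜ[k] b))
      = W.eps (W.mu (y ⊗ₜ[k] b)) • (W.mu (x ⊗ₜ[k] a) ⊗ₜ[k] z) := by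
  simp [G5, smul_tmul']

/-- `G6 ((x⊗(y⊗z))⊗(a⊗b)) = ε(a⬝y) • (x ⊗ (b⬝z))`. -/
noncomputable def G6 : (H ⊗[k] (H ⊗[k] H)) ⊗[k] (H ⊗[k] H) →ₗ[k] H ⊗[k] H :=
  lTensor H (C9L W) ∘ₗ lTensor H (TensorProduct.comm k (H ⊗[k] H) (H ⊗[k] H)).toLinearMap
    ∘ₗ (TensorProduct.assoc k H (H ⊗[k] H) (H ⊗[k] H)).toLinearMap

@[simp] lemma G6_tmul (x y z a b : H) :
    G6 (k := k) W ((x ⊗ₜ[k] (y ⊗ₜ[k] z)) ⊗ₜ[k] (a ⊗ₜ[k] b))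
      = W.eps (W.mu (a ⊗ₜ[k] y)) • (x ⊗ₜ[k] W.mu (b ⊗ₜ[k] z)) := by
  simp [G6, tmul_smul]

/-- the identity (a) : `Σ h₁ ⊗ Π^L(h₂) = Σ (1₁⬝h) ⊗ 1₂`. -/
lemma ida (h : H) :
    lTensor H W.toWeakBialgebraStr.piL (W.delta h)
      = rTensor H (W.mu ∘ₗ (TensorProduct.mk k H H).flip h) (W.delta W.one) := by
  conv_lhs => rw [← deltaOneMul W h]
  have c2 : ∀ (T S : H ⊗[k] H),
      lTensor H W.toWeakBialgebraStr.piL (TensorProduct.map W.mu W.mu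
        (tensorTensorTensorComm k H H H H (T ⊗ₜ[k] S)))
        = G5 W (sh1 W (T ⊗ₜ[k] W.delta W.one) ⊗ₜ[k] S) := by
    intro T S
    induction T using TensorProduct.induction_on with
    | zero => simp
    | tmul x y =>
        induction S using TensorProduct.induction_on with
        | zero => simp
        | tmul a b =>
            have inner : ∀ t : H ⊗[k] H,
                G5 W (sh1 W ((x ⊗ₜ[k] y) ⊗ₜ[k] t) ⊗ₜ[k] (a ⊗ₜ[k] b))
                  = W.mu (x ⊗ₜ[k] a) ⊗ₜ[k] PLC W (t ⊗ₜ[k] W.mu (y ⊗ₜ[k] b)) := by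
              intro t
              induction t using TensorProduct.induction_on with
              | zero => simp
              | tmul e f => rw [sh1_tmul, G5_tmul, PLC_tmul, W.mul_assoc', tmul_smul]
              | add t1 t2 h1 h2 => simp only [tmul_add, add_tmul, map_add, h1, h2]
            rw [inner (W.delta W.one)]
            simp [piL_eq]
        | add s1 s2 h1 h2 => simp only [add_tmul, tmul_add, map_add, h1, h2]
    | add t1 t2 h1 h2 => simp only [add_tmul, tmul_add, map_add, h1, h2]
  rw [c2 (W.delta W.one) (W.delta h), ← a3'R W]
  have hX : lTensor H W.delta (W.delta W.one)
      = (TensorProduct.assoc k H H H) (rTensor H W.delta (W.delta W.one)) := by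
    rw [W.coassoc]; simp
  rw [hX]
  have c4 : ∀ T : H ⊗[k] H,
      G5 W ((TensorProduct.assoc k H H H) (rTensor H W.delta T) ⊗ₜ[k] W.delta h)
        = rTensor H (W.mu ∘ₗ (TensorProduct.mk k H H).flip h) T := by
    intro T
    induction T using TensorProduct.induction_on with
    | zero => simp
    | tmul p r =>
        simp [G5, contract1]
    | add t1 t2 h1 h2 => simp only [add_tmul, tmul_add, map_add, h1, h2]
  rw [c4 (W.delta W.one)]

/-- the identity (b) : `Σ Π^R(h₁) ⊗ h₂ = Σ 1₁ ⊗ (h⬝1₂)`. -/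
lemma idb (h : H) :
    rTensor H W.toWeakBialgebraStr.piR (W.delta h)
      = lTensor H (W.mu ∘ₗ TensorProduct.mk k H H h) (W.delta W.one) := by
  conv_lhs => rw [← deltaMulOne W h]
  have c2 : ∀ (T S : H ⊗[k] H),
      rTensor H W.toWeakBialgebraStr.piR (TensorProduct.map W.mu W.mu
        (tensorTensorTensorComm k H H H H (S ⊗ₜ[k] T)))
        = G6 W (sh1 W (W.delta W.one ⊗ₜ[k] T) ⊗ₜ[k] S) := by
    intro T S
    induction T using TensorProduct.induction_on with
    | zero => simp
    | tmul c d =>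
        induction S using TensorProduct.induction_on with
        | zero => simp
        | tmul a b =>
            have inner : ∀ t : H ⊗[k] H,
                G6 W (sh1 W (t ⊗ₜ[k] (c ⊗ₜ[k] d)) ⊗ₜ[k] (a ⊗ₜ[k] b))
                  = PRC W (t ⊗ₜ[k] W.mu (a ⊗ₜ[k] c)) ⊗ₜ[k] W.mu (b ⊗ₜ[k] d) := by
              intro t
              induction t using TensorProduct.induction_on with
              | zero => simp
              | tmul e f =>
                  rw [sh1_tmul, G6_tmul, PRC_tmul, W.mul_assoc', smul_tmul']
              | add t1 t2 h1 h2 => simp only [tmul_add, add_tmul, map_add, h1, h2]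
            rw [inner (W.delta W.one)]
            simp [piR_eq]
        | add s1 s2 h1 h2 => simp only [add_tmul, tmul_add, map_add, h1, h2]
    | add t1 t2 h1 h2 => simp only [add_tmul, tmul_add, map_add, h1, h2]
  rw [c2 (W.delta W.one) (W.delta h), ← a3'R W]
  have c4 : ∀ T : H ⊗[k] H,
      G6 W (lTensor H W.delta T ⊗ₜ[k] W.delta h)
        = lTensor H (W.mu ∘ₗ TensorProduct.mk k H H h) T := by
    intro T
    induction T using TensorProduct.induction_on with
    | zero => simp
    | tmul x q =>
        simp only [lTensor_tmul, G6, comp_apply, LinearEquiv.coe_coe, assoc_tmul, comm_tmul]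
        rw [contract1L]
        rfl
    | add t1 t2 h1 h2 => simp only [add_tmul, tmul_add, map_add, h1, h2]
  rw [c4 (W.delta W.one)]

end WK11
namespace WK11
open WK TensorProduct LinearMap

variable {k : Type} [CommRing k] {H : Type} [AddCommGroup H] [Module k H]
    {B : Type} [Ring B] [Algebra k B]
variable (W : WeakHopfStr k H)

/-- swap of the first two legs on `H⊗(H⊗H)`. -/
noncomputable def s12M : H ⊗[k] (H ⊗[k] H) →ₗ[k] H ⊗[k] (H ⊗[k] H) :=
  (TensorProduct.assoc k H H H).toLinearMap
    ∘ₗ rTensor H (TensorProduct.comm k H H).toLinearMap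
    ∘ₗ (TensorProduct.assoc k H H H).symm.toLinearMap

@[simp] lemma s12M_tmul (x y z : H) :
    s12M (k := k) (x ⊗ₜ[k] (y ⊗ₜ[k] z)) = y ⊗ₜ[k] (x ⊗ₜ[k] z) := by
  simp [s12M]

lemma s12_D3 (hco : Cocomm W.toWeakBialgebraStr) (x : H) :
    s12M (lTensor H W.delta (W.delta x)) = lTensor H W.delta (W.delta x) := by
  have hco1 : lTensor H W.delta (W.delta x)
      = (TensorProduct.assoc k H H H) (rTensor H W.delta (W.delta x)) := by
    rw [W.coassoc]; simp
  rw [hco1]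
  simp only [s12M, comp_apply, LinearEquiv.coe_coe, LinearEquiv.symm_apply_apply]
  rw [← rTensor_comp_apply, ccM W hco]

lemma s23_D3 (hco : Cocomm W.toWeakBialgebraStr) (x : H) :
    lTensor H (TensorProduct.comm k H H).toLinearMap (lTensor H W.delta (W.delta x))
      = lTensor H W.delta (W.delta x) := by
  rw [← lTensor_comp_apply, ccM W hco]

/-- `SHA8 ((a⊗b)⊗(c⊗d)) = (c⬝a) ⊗ (d⊗b)`. -/
noncomputable def SHA8 : (H ⊗[k] H) ⊗[k] (H ⊗[k] H) →ₗ[k] H ⊗[k] (H ⊗[k] H) :=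
  lTensor H (TensorProduct.comm k H H).toLinearMap ∘ₗ s12M ∘ₗ sh1 W
    ∘ₗ rTensor (H ⊗[k] H) (TensorProduct.comm k H H).toLinearMap

@[simp] lemma SHA8_tmul (a b c d : H) :
    SHA8 (k := k) W ((a ⊗ₜ[k] b) ⊗ₜ[k] (c ⊗ₜ[k] d))
      = W.mu (c ⊗ₜ[k] a) ⊗ₜ[k] (d ⊗ₜ[k] b) := by
  simp [SHA8]

lemma A8 (hco : Cocomm W.toWeakBialgebraStr) :
    SHA8 W (W.delta W.one ⊗ₜ[k] W.delta W.one) = lTensor H W.delta (W.delta W.one) := by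
  have h0 : rTensor (H ⊗[k] H) (TensorProduct.comm k H H).toLinearMap
      (W.delta W.one ⊗ₜ[k] W.delta W.one) = W.delta W.one ⊗ₜ[k] W.delta W.one := by
    rw [rTensor_tmul]
    rw [show (TensorProduct.comm k H H).toLinearMap (W.delta W.one) = W.delta W.one from hco W.one]
  simp only [SHA8, comp_apply]
  rw [h0, ← a3'R W, s12_D3 W hco, s23_D3 W hco]

/-- `SHA8R ((a⊗b)⊗(c⊗d)) = a ⊗ (c ⊗ (b⬝d))`. -/
noncomputable def SHA8R : (H ⊗[k] H) ⊗[k] (H ⊗[k] H) →ₗ[k] H ⊗[k] (H ⊗[k] H) :=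
  lTensor H (TensorProduct.comm k H H).toLinearMap ∘ₗ sh0 W
    ∘ₗ lTensor (H ⊗[k] H) (TensorProduct.comm k H H).toLinearMap

@[simp] lemma SHA8R_tmul (a b c d : H) :
    SHA8R (k := k) W ((a ⊗ₜ[k] b) ⊗ₜ[k] (c ⊗ₜ[k] d))
      = a ⊗ₜ[k] (c ⊗ₜ[k] W.mu (b ⊗ₜ[k] d)) := by
  simp [SHA8R]

lemma A8R (hco : Cocomm W.toWeakBialgebraStr) :
    SHA8R W (W.delta W.one ⊗ₜ[k] W.delta W.one) = lTensor H W.delta (W.delta W.one) := by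
  have h0 : lTensor (H ⊗[k] H) (TensorProduct.comm k H H).toLinearMap
      (W.delta W.one ⊗ₜ[k] W.delta W.one) = W.delta W.one ⊗ₜ[k] W.delta W.one := by
    rw [lTensor_tmul]
    rw [show (TensorProduct.comm k H H).toLinearMap (W.delta W.one) = W.delta W.one from hco W.one]
  simp only [SHA8R, comp_apply]
  rw [h0, ← a3R W, s23_D3 W hco]

/-- the scalar contraction `SC h (x ⊗ Y) = ε(x⬝h) • Y`. -/
noncomputable def SC (h : H) : H ⊗[k] (H ⊗[k] H) →ₗ[k] H ⊗[k] H :=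
  (TensorProduct.lid k (H ⊗[k] H)).toLinearMap
    ∘ₗ rTensor (H ⊗[k] H) (W.toWeakBialgebraStr.epsmu ∘ₗ (TensorProduct.mk k H H).flip h)

@[simp] lemma SC_tmul (h x : H) (Y : H ⊗[k] H) :
    SC (k := k) W h (x ⊗ₜ[k] Y) = W.eps (W.mu (x ⊗ₜ[k] h)) • Y := by
  simp [SC, WeakBialgebraStr.epsmu]

/-- `SCR2 h (x ⊗ (y ⊗ z)) = ε(h⬝z) • (x ⊗ y)`. -/
noncomputable def SCR2 (h : H) : H ⊗[k] (H ⊗[k] H) →ₗ[k] H ⊗[k] H :=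
  (TensorProduct.rid k (H ⊗[k] H)).toLinearMap
    ∘ₗ lTensor (H ⊗[k] H) (W.toWeakBialgebraStr.epsmu ∘ₗ TensorProduct.mk k H H h)
    ∘ₗ (TensorProduct.assoc k H H H).symm.toLinearMap

@[simp] lemma SCR2_tmul (h x y z : H) :
    SCR2 (k := k) W h (x ⊗ₜ[k] (y ⊗ₜ[k] z))
      = W.eps (W.mu (h ⊗ₜ[k] z)) • (x ⊗ₜ[k] y) := by
  simp [SCR2, WeakBialgebraStr.epsmu]

/-- bridge : `Δ(Π^L h) = SC h (Δ²(1))`. -/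
lemma v1_bridge (h : H) :
    W.delta (W.toWeakBialgebraStr.piL h) = SC W h (lTensor H W.delta (W.delta W.one)) := by
  rw [piL_eq]
  have key : ∀ t : H ⊗[k] H,
      W.delta (PLC W (t ⊗ₜ[k] h)) = SC W h (lTensor H W.delta t) := by
    intro t
    induction t using TensorProduct.induction_on with
    | zero => simp
    | tmul x y => simp
    | add t1 t2 h1 h2 => simp only [add_tmul, map_add, h1, h2]
  exact key (W.delta W.one)

/-- bridge : `Δ(Π^R h) = SCR2 h (Δ²(1))`. -/
lemma v1R_bridge (h : H) :
    W.delta (W.toWeakBialgebraStr.piR h) = SCR2 W h (lTensor H W.delta (W.delta W.one)) := by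
  rw [piR_eq]
  have hX : rTensor H W.delta (W.delta W.one)
      = (TensorProduct.assoc k H H H).symm (lTensor H W.delta (W.delta W.one)) := W.coassoc _
  have key : ∀ t : H ⊗[k] H,
      W.delta (PRC W (t ⊗ₜ[k] h))
        = (TensorProduct.rid k (H ⊗[k] H)).toLinearMap
            ((lTensor (H ⊗[k] H) (W.toWeakBialgebraStr.epsmu ∘ₗ TensorProduct.mk k H H h))
              (rTensor H W.delta t)) := by
    intro t
    induction t using TensorProduct.induction_on with
    | zero => simp
    | tmul x y => simp [WeakBialgebraStr.epsmu]
    | add t1 t2 h1 h2 => simp only [add_tmul, map_add, h1, h2]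
  rw [key (W.delta W.one)]
  rw [hX]
  rfl

/-- A7 : `Σ Π^L(1₁⬝h) ⊗ 1₂ = SC h (SHA8 (Δ1 ⊗ Δ1))`. -/
lemma cA7 (h : H) : ∀ T : H ⊗[k] H,
    rTensor H (W.toWeakBialgebraStr.piL ∘ₗ W.mu ∘ₗ (TensorProduct.mk k H H).flip h) T
      = SC W h (SHA8 W (T ⊗ₜ[k] W.delta W.one)) := by
  intro T
  induction T using TensorProduct.induction_on with
  | zero => simp
  | tmul a b =>
      have inner : ∀ t : H ⊗[k] H,
          SC W h (SHA8 W ((a ⊗ₜ[k] b) ⊗ₜ[k] t))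
            = PLC W (t ⊗ₜ[k] W.mu (a ⊗ₜ[k] h)) ⊗ₜ[k] b := by
        intro t
        induction t using TensorProduct.induction_on with
        | zero => simp
        | tmul c d =>
            rw [SHA8_tmul, SC_tmul, PLC_tmul, W.mul_assoc', smul_tmul']
        | add t1 t2 h1 h2 => simp only [add_tmul, tmul_add, map_add, h1, h2]
      rw [inner (W.delta W.one)]
      simp [piL_eq]
  | add t1 t2 h1 h2 => simp only [add_tmul, tmul_add, map_add, h1, h2]

/-- A7R : `Σ 1₁ ⊗ Π^R(h⬝1₂) = SCR2 h (SHA8R (Δ1 ⊗ Δ1))`. -/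
lemma cA7R (h : H) : ∀ T : H ⊗[k] H,
    lTensor H (W.toWeakBialgebraStr.piR ∘ₗ W.mu ∘ₗ TensorProduct.mk k H H h) T
      = SCR2 W h (SHA8R W (T ⊗ₜ[k] W.delta W.one)) := by
  intro T
  induction T using TensorProduct.induction_on with
  | zero => simp
  | tmul a b =>
      have inner : ∀ t : H ⊗[k] H,
          SCR2 W h (SHA8R W ((a ⊗ₜ[k] b) ⊗ₜ[k] t))
            = a ⊗ₜ[k] PRC W (t ⊗ₜ[k] W.mu (h ⊗ₜ[k] b)) := by
        intro t
        induction t using TensorProduct.induction_on with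
        | zero => simp
        | tmul c d =>
            rw [SHA8R_tmul, SCR2_tmul, PRC_tmul, W.mul_assoc', tmul_smul]
        | add t1 t2 h1 h2 => simp only [add_tmul, tmul_add, map_add, h1, h2]
      rw [inner (W.delta W.one)]
      simp [piR_eq]
  | add t1 t2 h1 h2 => simp only [add_tmul, tmul_add, map_add, h1, h2]

/-- (v) : `Π^L` is a coalgebra morphism. -/
lemma piL_comul (hco : Cocomm W.toWeakBialgebraStr) (h : H) :
    TensorProduct.map W.toWeakBialgebraStr.piL W.toWeakBialgebraStr.piL (W.delta h)
      = W.delta (W.toWeakBialgebraStr.piL h) := by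
  have h1 : TensorProduct.map W.toWeakBialgebraStr.piL W.toWeakBialgebraStr.piL (W.delta h)
      = rTensor H W.toWeakBialgebraStr.piL (lTensor H W.toWeakBialgebraStr.piL (W.delta h)) := by
    rw [← rTensor_comp_lTensor]; rfl
  rw [h1, ida W h, ← rTensor_comp_apply, cA7 W h (W.delta W.one), A8 W hco, ← v1_bridge W h]

/-- (vi-c) : `Π^R` is a coalgebra morphism. -/
lemma piR_comul (hco : Cocomm W.toWeakBialgebraStr) (h : H) :
    TensorProduct.map W.toWeakBialgebraStr.piR W.toWeakBialgebraStr.piR (W.delta h)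
      = W.delta (W.toWeakBialgebraStr.piR h) := by
  have h1 : TensorProduct.map W.toWeakBialgebraStr.piR W.toWeakBialgebraStr.piR (W.delta h)
      = lTensor H W.toWeakBialgebraStr.piR (rTensor H W.toWeakBialgebraStr.piR (W.delta h)) := by
    rw [← lTensor_comp_rTensor]; rfl
  rw [h1, idb W h, ← lTensor_comp_apply, cA7R W h (W.delta W.one), A8R W hco, ← v1R_bridge W h]

end WK11
namespace WK11
open WK TensorProduct LinearMap

variable {k : Type} [CommRing k] {H : Type} [AddCommGroup H] [Module k H]
    {B : Type} [Ring B] [Algebra k B]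

/-- right-nested threefold extensionality. -/
lemma ext3R {M N P Q : Type} [AddCommGroup M] [Module k M] [AddCommGroup N] [Module k N]
    [AddCommGroup P] [Module k P] [AddCommGroup Q] [Module k Q]
    {f g : M ⊗[k] (N ⊗[k] P) →ₗ[k] Q}
    (hfg : ∀ x y z, f (x ⊗ₜ[k] (y ⊗ₜ[k] z)) = g (x ⊗ₜ[k] (y ⊗ₜ[k] z))) : f = g := by
  apply TensorProduct.ext'
  intro x t
  induction t using TensorProduct.induction_on with
  | zero => simp
  | tmul y z => exact hfg x y z
  | add a b h1 h2 => rw [tmul_add, map_add, map_add, h1, h2]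

variable (W : WeakHopfStr k H)

/-- convolution on `Hom(H,H)`. -/
noncomputable def conv1 (f g : H →ₗ[k] H) : H →ₗ[k] H :=
  W.mu ∘ₗ TensorProduct.map f g ∘ₗ W.delta

/-- multiplication of `H ⊗ H`. -/
noncomputable def mu2 : (H ⊗[k] H) ⊗[k] (H ⊗[k] H) →ₗ[k] H ⊗[k] H :=
  TensorProduct.map W.mu W.mu ∘ₗ (tensorTensorTensorComm k H H H H).toLinearMap

@[simp] lemma mu2_tmul (a b c d : H) :
    mu2 (k := k) W ((a ⊗ₜ[k] b) ⊗ₜ[k] (c ⊗ₜ[k] d))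
      = W.mu (a ⊗ₜ[k] c) ⊗ₜ[k] W.mu (b ⊗ₜ[k] d) := by
  simp [mu2]

lemma mu2_delta (a c : H) :
    mu2 (k := k) W (W.delta a ⊗ₜ[k] W.delta c) = W.delta (W.mu (a ⊗ₜ[k] c)) := by
  rw [W.a1]; rfl

lemma mu2_assoc3 : ∀ A B C : H ⊗[k] H,
    mu2 W (mu2 W (A ⊗ₜ[k] B) ⊗ₜ[k] C) = mu2 W (A ⊗ₜ[k] mu2 W (B ⊗ₜ[k] C)) := by
  intro A B C
  induction A using TensorProduct.induction_on with
  | zero => simp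
  | tmul a1 a2 =>
      induction B using TensorProduct.induction_on with
      | zero => simp
      | tmul b1 b2 =>
          induction C using TensorProduct.induction_on with
          | zero => simp
          | tmul c1 c2 => simp [W.mul_assoc']
          | add u v h1 h2 => simp only [tmul_add, map_add, h1, h2]
      | add u v h1 h2 => simp only [add_tmul, tmul_add, map_add, h1, h2]
  | add u v h1 h2 => simp only [add_tmul, tmul_add, map_add, h1, h2]

/-- convolution on `Hom(H, H⊗H)`. -/
noncomputable def conv2 (F G : H →ₗ[k] H ⊗[k] H) : H →ₗ[k] H ⊗[k] H :=
  mu2 W ∘ₗ TensorProduct.map F G ∘ₗ W.delta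

lemma conv1_assoc (f g h : H →ₗ[k] H) :
    conv1 W (conv1 W f g) h = conv1 W f (conv1 W g h) := by
  apply LinearMap.ext; intro x
  have step1 : ∀ t : H ⊗[k] H,
      W.mu (TensorProduct.map (conv1 W f g) h t)
        = (W.mu ∘ₗ TensorProduct.map W.mu h ∘ₗ rTensor H (TensorProduct.map f g))
            (rTensor H W.delta t) := by
    intro t
    induction t using TensorProduct.induction_on with
    | zero => simp
    | tmul a b => rfl
    | add u v h1 h2 => simp only [map_add, h1, h2]
  have step4 : ∀ t : H ⊗[k] H,
      (W.mu ∘ₗ TensorProduct.map f W.mu ∘ₗ lTensor H (TensorProduct.map g h))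
          (lTensor H W.delta t)
        = W.mu (TensorProduct.map f (conv1 W g h) t) := by
    intro t
    induction t using TensorProduct.induction_on with
    | zero => simp
    | tmul a b => rfl
    | add u v h1 h2 => simp only [map_add, h1, h2]
  have key : (W.mu ∘ₗ TensorProduct.map W.mu h ∘ₗ rTensor H (TensorProduct.map f g))
        ∘ₗ (TensorProduct.assoc k H H H).symm.toLinearMap
      = W.mu ∘ₗ TensorProduct.map f W.mu ∘ₗ lTensor H (TensorProduct.map g h) := by
    apply ext3R
    intro x y z
    simp [W.mul_assoc']
  show W.mu (TensorProduct.map (conv1 W f g) h (W.delta x))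
      = W.mu (TensorProduct.map f (conv1 W g h) (W.delta x))
  rw [step1 (W.delta x), ← step4 (W.delta x)]
  rw [show rTensor H W.delta (W.delta x)
      = (TensorProduct.assoc k H H H).symm (lTensor H W.delta (W.delta x)) from W.coassoc x]
  exact LinearMap.congr_fun key (lTensor H W.delta (W.delta x))

lemma conv2_assoc (F G K : H →ₗ[k] H ⊗[k] H) :
    conv2 W (conv2 W F G) K = conv2 W F (conv2 W G K) := by
  apply LinearMap.ext; intro x
  have step1 : ∀ t : H ⊗[k] H,
      mu2 W (TensorProduct.map (conv2 W F G) K t)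
        = (mu2 W ∘ₗ TensorProduct.map (mu2 W) K ∘ₗ rTensor H (TensorProduct.map F G))
            (rTensor H W.delta t) := by
    intro t
    induction t using TensorProduct.induction_on with
    | zero => simp
    | tmul a b => rfl
    | add u v h1 h2 => simp only [map_add, h1, h2]
  have step4 : ∀ t : H ⊗[k] H,
      (mu2 W ∘ₗ TensorProduct.map F (mu2 W) ∘ₗ lTensor H (TensorProduct.map G K))
          (lTensor H W.delta t)
        = mu2 W (TensorProduct.map F (conv2 W G K) t) := by
    intro t
    induction t using TensorProduct.induction_on with
    | zero => simp
    | tmul a b => rfl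
    | add u v h1 h2 => simp only [map_add, h1, h2]
  have key : (mu2 W ∘ₗ TensorProduct.map (mu2 W) K ∘ₗ rTensor H (TensorProduct.map F G))
        ∘ₗ (TensorProduct.assoc k H H H).symm.toLinearMap
      = mu2 W ∘ₗ TensorProduct.map F (mu2 W) ∘ₗ lTensor H (TensorProduct.map G K) := by
    apply ext3R
    intro x y z
    simpa using mu2_assoc3 W (F x) (G y) (K z)
  show mu2 W (TensorProduct.map (conv2 W F G) K (W.delta x))
      = mu2 W (TensorProduct.map F (conv2 W G K) (W.delta x))
  rw [step1 (W.delta x), ← step4 (W.delta x)]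
  rw [show rTensor H W.delta (W.delta x)
      = (TensorProduct.assoc k H H H).symm (lTensor H W.delta (W.delta x)) from W.coassoc x]
  exact LinearMap.congr_fun key (lTensor H W.delta (W.delta x))

lemma conv1_inner : conv1 W W.lam (conv1 W LinearMap.id W.lam) = W.lam := by
  simp only [conv1]
  exact W.antipode_inner

lemma conv1_r : conv1 W LinearMap.id W.lam = W.toWeakBialgebraStr.piL := by
  simp only [conv1]; exact W.antipode_r

lemma conv1_l : conv1 W W.lam LinearMap.id = W.toWeakBialgebraStr.piR := by
  simp only [conv1]; exact W.antipode_l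

lemma conv1_sandwich : conv1 W (conv1 W W.lam LinearMap.id) W.lam = W.lam := by
  rw [conv1_assoc]; exact conv1_inner W

lemma conv1_piL_id : conv1 W W.toWeakBialgebraStr.piL LinearMap.id = LinearMap.id :=
  LinearMap.ext fun x => A4L W x

lemma conv1_id_piR : conv1 W LinearMap.id W.toWeakBialgebraStr.piR = LinearMap.id :=
  LinearMap.ext fun x => A4R W x

/-- `F ∗ G₁` etc. -/
lemma FG1 : conv2 W W.delta (W.delta ∘ₗ W.lam) = W.delta ∘ₗ conv1 W LinearMap.id W.lam := by
  apply LinearMap.ext; intro x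
  have step : ∀ t : H ⊗[k] H,
      mu2 W (TensorProduct.map W.delta (W.delta ∘ₗ W.lam) t)
        = W.delta (W.mu (TensorProduct.map LinearMap.id W.lam t)) := by
    intro t
    induction t using TensorProduct.induction_on with
    | zero => simp
    | tmul a b => simp [mu2_delta]
    | add u v h1 h2 => simp only [map_add, h1, h2]
  exact step (W.delta x)

lemma G1F : conv2 W (W.delta ∘ₗ W.lam) W.delta = W.delta ∘ₗ conv1 W W.lam LinearMap.id := by
  apply LinearMap.ext; intro x
  have step : ∀ t : H ⊗[k] H,
      mu2 W (TensorProduct.map (W.delta ∘ₗ W.lam) W.delta t)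
        = W.delta (W.mu (TensorProduct.map W.lam LinearMap.id t)) := by
    intro t
    induction t using TensorProduct.induction_on with
    | zero => simp
    | tmul a b => simp [mu2_delta]
    | add u v h1 h2 => simp only [map_add, h1, h2]
  exact step (W.delta x)

lemma conv2_deltas (u v : H →ₗ[k] H) :
    conv2 W (W.delta ∘ₗ u) (W.delta ∘ₗ v) = W.delta ∘ₗ conv1 W u v := by
  apply LinearMap.ext; intro x
  have step : ∀ t : H ⊗[k] H,
      mu2 W (TensorProduct.map (W.delta ∘ₗ u) (W.delta ∘ₗ v) t)
        = W.delta (W.mu (TensorProduct.map u v t)) := by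
    intro t
    induction t using TensorProduct.induction_on with
    | zero => simp
    | tmul a b => simp [mu2_delta]
    | add u' v' h1 h2 => simp only [map_add, h1, h2]
  exact step (W.delta x)

lemma mapdd (x : H) :
    TensorProduct.map W.delta W.delta (W.delta x)
      = (TensorProduct.assoc k H H (H ⊗[k] H)).symm
          (lTensor H (lTensor H W.delta) (lTensor H W.delta (W.delta x))) := by
  have h1 : ∀ t : H ⊗[k] H,
      TensorProduct.map W.delta W.delta t
        = (TensorProduct.assoc k H H (H ⊗[k] H)).symm
            (lTensor H (lTensor H W.delta)
              ((TensorProduct.assoc k H H H) (rTensor H W.delta t))) := by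
    intro t
    induction t using TensorProduct.induction_on with
    | zero => simp
    | tmul a b =>
        have inner : ∀ s : H ⊗[k] H,
            (TensorProduct.assoc k H H (H ⊗[k] H)).symm
              (lTensor H (lTensor H W.delta) ((TensorProduct.assoc k H H H) (s ⊗ₜ[k] b)))
              = s ⊗ₜ[k] W.delta b := by
          intro s
          induction s using TensorProduct.induction_on with
          | zero => simp
          | tmul p q => simp
          | add u v h1 h2 => simp only [add_tmul, map_add, h1, h2]
        rw [rTensor_tmul, inner (W.delta a)]
        rfl
    | add u v h1 h2 => simp only [map_add, h1, h2]
  rw [h1 (W.delta x)]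
  rw [show (TensorProduct.assoc k H H H) (rTensor H W.delta (W.delta x))
      = lTensor H W.delta (W.delta x) from by rw [W.coassoc]; simp]

lemma exch (hco : Cocomm W.toWeakBialgebraStr) (x : H) :
    tensorTensorTensorComm k H H H H (TensorProduct.map W.delta W.delta (W.delta x))
      = TensorProduct.map W.delta W.delta (W.delta x) := by
  rw [mapdd]
  have hcomm : (tensorTensorTensorComm k H H H H).toLinearMap
        ∘ₗ (TensorProduct.assoc k H H (H ⊗[k] H)).symm.toLinearMap
      = (TensorProduct.assoc k H H (H ⊗[k] H)).symm.toLinearMap ∘ₗ lTensor H s12M := by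
    apply TensorProduct.ext'
    intro a t
    induction t using TensorProduct.induction_on with
    | zero => simp
    | tmul y u =>
        induction u using TensorProduct.induction_on with
        | zero => simp
        | tmul z w => simp
        | add u1 u2 h1 h2 => simp only [tmul_add, map_add, h1, h2]
    | add t1 t2 h1 h2 => simp only [tmul_add, map_add, h1, h2]
  have happ := LinearMap.congr_fun hcomm
    (lTensor H (lTensor H W.delta) (lTensor H W.delta (W.delta x)))
  simp only [comp_apply, LinearEquiv.coe_coe] at happ
  rw [happ]
  congr 1
  rw [← lTensor_comp_apply, ← lTensor_comp_apply]
  have s12c : s12M ∘ₗ lTensor H W.delta ∘ₗ W.delta = lTensor H W.delta ∘ₗ W.delta :=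
    LinearMap.ext fun y => s12_D3 W hco y
  rw [show (s12M ∘ₗ lTensor H W.delta : H ⊗[k] H →ₗ[k] _) ∘ₗ W.delta
      = s12M ∘ₗ lTensor H W.delta ∘ₗ W.delta from rfl, s12c]
  rw [lTensor_comp_apply]

lemma conv2_two (hco : Cocomm W.toWeakBialgebraStr) (u u' v v' : H →ₗ[k] H) :
    conv2 W (TensorProduct.map u u' ∘ₗ W.delta) (TensorProduct.map v v' ∘ₗ W.delta)
      = TensorProduct.map (conv1 W u v) (conv1 W u' v') ∘ₗ W.delta := by
  apply LinearMap.ext; intro x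
  have step1 : ∀ t : H ⊗[k] H,
      mu2 W (TensorProduct.map (TensorProduct.map u u' ∘ₗ W.delta)
        (TensorProduct.map v v' ∘ₗ W.delta) t)
        = (mu2 W ∘ₗ TensorProduct.map (TensorProduct.map u u') (TensorProduct.map v v'))
            (TensorProduct.map W.delta W.delta t) := by
    intro t
    induction t using TensorProduct.induction_on with
    | zero => simp
    | tmul a b => rfl
    | add s1 s2 h1 h2 => simp only [map_add, h1, h2]
  have key : mu2 W ∘ₗ TensorProduct.map (TensorProduct.map u u') (TensorProduct.map v v')
      = TensorProduct.map (W.mu ∘ₗ TensorProduct.map u v) (W.mu ∘ₗ TensorProduct.map u' v')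
          ∘ₗ (tensorTensorTensorComm k H H H H).toLinearMap := by
    apply TensorProduct.ext_fourfold'
    intro a b c d
    simp [mu2]
  have step3 : ∀ t : H ⊗[k] H,
      (TensorProduct.map (W.mu ∘ₗ TensorProduct.map u v) (W.mu ∘ₗ TensorProduct.map u' v'))
        (TensorProduct.map W.delta W.delta t)
        = TensorProduct.map (conv1 W u v) (conv1 W u' v') t := by
    intro t
    induction t using TensorProduct.induction_on with
    | zero => simp
    | tmul a b => rfl
    | add s1 s2 h1 h2 => simp only [map_add, h1, h2]
  show mu2 W (TensorProduct.map _ _ (W.delta x)) = _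
  rw [step1 (W.delta x)]
  have hk := LinearMap.congr_fun key (TensorProduct.map W.delta W.delta (W.delta x))
  simp only [comp_apply, LinearEquiv.coe_coe] at hk ⊢
  rw [hk, exch W hco x, step3 (W.delta x)]

/-- `Δ∘λ = (λ⊗λ)∘Δ` for cocommutative weak Hopf algebras. -/
lemma deltaLamM (hco : Cocomm W.toWeakBialgebraStr) :
    W.delta ∘ₗ W.lam = TensorProduct.map W.lam W.lam ∘ₗ W.delta := by
  have hFG2 : conv2 W W.delta (TensorProduct.map W.lam W.lam ∘ₗ W.delta)
      = TensorProduct.map W.toWeakBialgebraStr.piL W.toWeakBialgebraStr.piL ∘ₗ W.delta := by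
    have h0 : conv2 W W.delta (TensorProduct.map W.lam W.lam ∘ₗ W.delta)
        = conv2 W (TensorProduct.map LinearMap.id LinearMap.id ∘ₗ W.delta)
            (TensorProduct.map W.lam W.lam ∘ₗ W.delta) := by
      rw [TensorProduct.map_id, id_comp]
    rw [h0, conv2_two W hco, conv1_r]
  have hG2F : conv2 W (TensorProduct.map W.lam W.lam ∘ₗ W.delta) W.delta
      = TensorProduct.map W.toWeakBialgebraStr.piR W.toWeakBialgebraStr.piR ∘ₗ W.delta := by
    have h0 : conv2 W (TensorProduct.map W.lam W.lam ∘ₗ W.delta) W.delta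
        = conv2 W (TensorProduct.map W.lam W.lam ∘ₗ W.delta)
            (TensorProduct.map LinearMap.id LinearMap.id ∘ₗ W.delta) := by
      rw [TensorProduct.map_id, id_comp]
    rw [h0, conv2_two W hco, conv1_l]
  have bridge_v : conv2 W W.delta (W.delta ∘ₗ W.lam)
      = conv2 W W.delta (TensorProduct.map W.lam W.lam ∘ₗ W.delta) := by
    rw [FG1, conv1_r, hFG2]
    exact LinearMap.ext fun x => by
      simp only [comp_apply]
      exact (piL_comul W hco x).symm
  have bridge_vi : conv2 W (W.delta ∘ₗ W.lam) W.delta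
      = conv2 W (TensorProduct.map W.lam W.lam ∘ₗ W.delta) W.delta := by
    rw [G1F, conv1_l, hG2F]
    exact LinearMap.ext fun x => by
      simp only [comp_apply]
      exact (piR_comul W hco x).symm
  have absG1 : conv2 W (conv2 W (W.delta ∘ₗ W.lam) W.delta) (W.delta ∘ₗ W.lam)
      = W.delta ∘ₗ W.lam := by
    rw [G1F, conv2_deltas, conv1_sandwich]
  have absG2 : conv2 W (conv2 W (TensorProduct.map W.lam W.lam ∘ₗ W.delta) W.delta)
      (TensorProduct.map W.lam W.lam ∘ₗ W.delta) = TensorProduct.map W.lam W.lam ∘ₗ W.delta := by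
    rw [hG2F, conv2_two W hco]
    rw [show conv1 W W.toWeakBialgebraStr.piR W.lam = W.lam from by
      rw [← conv1_l, conv1_sandwich]]
  calc W.delta ∘ₗ W.lam
      = conv2 W (conv2 W (W.delta ∘ₗ W.lam) W.delta) (W.delta ∘ₗ W.lam) := absG1.symm
    _ = conv2 W (W.delta ∘ₗ W.lam) (conv2 W W.delta (W.delta ∘ₗ W.lam)) := conv2_assoc W _ _ _
    _ = conv2 W (W.delta ∘ₗ W.lam) (conv2 W W.delta (TensorProduct.map W.lam W.lam ∘ₗ W.delta)) := by
        rw [bridge_v]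
    _ = conv2 W (conv2 W (W.delta ∘ₗ W.lam) W.delta) (TensorProduct.map W.lam W.lam ∘ₗ W.delta) :=
        (conv2_assoc W _ _ _).symm
    _ = conv2 W (conv2 W (TensorProduct.map W.lam W.lam ∘ₗ W.delta) W.delta)
          (TensorProduct.map W.lam W.lam ∘ₗ W.delta) := by rw [bridge_vi]
    _ = TensorProduct.map W.lam W.lam ∘ₗ W.delta := absG2

lemma deltaLam (hco : Cocomm W.toWeakBialgebraStr) (h : H) :
    W.delta (W.lam h) = TensorProduct.map W.lam W.lam (W.delta h) :=
  LinearMap.congr_fun (deltaLamM W hco) h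

end WK11
namespace WK11
open WK TensorProduct LinearMap

variable {k : Type} [CommRing k] {H : Type} [AddCommGroup H] [Module k H]
    {B : Type} [Ring B] [Algebra k B]
variable (W : WeakHopfStr k H) (φ : H ⊗[k] B →ₗ[k] B) (σ σi : H ⊗[k] H →ₗ[k] B)

/-- `mulT` composed with maps on both slots. -/
lemma mulT_comp_map {M N M' N' : Type} [AddCommGroup M] [Module k M] [AddCommGroup N] [Module k N]
    [AddCommGroup M'] [Module k M'] [AddCommGroup N'] [Module k N']
    (f : M' →ₗ[k] B) (g : N' →ₗ[k] B) (a : M →ₗ[k] M') (b : N →ₗ[k] N') :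
    mulT (f ∘ₗ a) (g ∘ₗ b) = mulT f g ∘ₗ TensorProduct.map a b := by
  apply TensorProduct.ext'; intro x y; simp

/-- `σΛ` : `sigL f x = f (x₁ ⊗ λ(x₂))`. -/
noncomputable def sigL (f : H ⊗[k] H →ₗ[k] B) : H →ₗ[k] B :=
  f ∘ₗ TensorProduct.map LinearMap.id W.lam ∘ₗ W.delta

/-- `e = u1 ∘ Π^L`. -/
noncomputable def eS : H →ₗ[k] B := u1 φ ∘ₗ W.toWeakBialgebraStr.piL

lemma u1u1 (hφ : IsWMA W.toWeakBialgebraStr φ) (y : H) :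
    mulT (u1 φ) (u1 φ) (W.delta y) = u1 φ y := by
  have := W2r W φ hφ y 1
  rwa [u1_eq_phiR]

lemma R4 (hφ : IsWMA W.toWeakBialgebraStr φ) (hco : Cocomm W.toWeakBialgebraStr) (x : H) :
    mulT (eS W φ) (eS W φ) (W.delta x) = eS W φ x := by
  have h1 : mulT (eS W φ) (eS W φ)
      = mulT (u1 φ) (u1 φ)
          ∘ₗ TensorProduct.map W.toWeakBialgebraStr.piL W.toWeakBialgebraStr.piL :=
    mulT_comp_map _ _ _ _
  rw [LinearMap.congr_fun h1 (W.delta x)]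
  simp only [comp_apply]
  rw [piL_comul W hco, u1u1 W φ hφ]
  rfl

/-- `ξ' = (id⊗λ)∘δ` intertwines comultiplications. -/
lemma XIcomul (hco : Cocomm W.toWeakBialgebraStr) (x : H) :
    delta2 W.toWeakBialgebraStr (TensorProduct.map LinearMap.id W.lam (W.delta x))
      = TensorProduct.map (TensorProduct.map LinearMap.id W.lam ∘ₗ W.delta)
          (TensorProduct.map LinearMap.id W.lam ∘ₗ W.delta) (W.delta x) := by
  have h1 : ∀ t : H ⊗[k] H,
      TensorProduct.map W.delta W.delta (TensorProduct.map LinearMap.id W.lam t)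
        = TensorProduct.map LinearMap.id (TensorProduct.map W.lam W.lam)
            (TensorProduct.map W.delta W.delta t) := by
    intro t
    induction t using TensorProduct.induction_on with
    | zero => simp
    | tmul y z => simp [deltaLam W hco]
    | add u v h1 h2 => simp only [map_add, h1, h2]
  have h2 : (tensorTensorTensorComm k H H H H).toLinearMap
        ∘ₗ TensorProduct.map LinearMap.id (TensorProduct.map W.lam W.lam)
      = TensorProduct.map (TensorProduct.map LinearMap.id W.lam)
          (TensorProduct.map LinearMap.id W.lam)
          ∘ₗ (tensorTensorTensorComm k H H H H).toLinearMap := by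
    apply TensorProduct.ext_fourfold'
    intro a b c d
    simp
  have h3 : ∀ t : H ⊗[k] H,
      TensorProduct.map (TensorProduct.map LinearMap.id W.lam)
          (TensorProduct.map LinearMap.id W.lam) (TensorProduct.map W.delta W.delta t)
        = TensorProduct.map (TensorProduct.map LinearMap.id W.lam ∘ₗ W.delta)
            (TensorProduct.map LinearMap.id W.lam ∘ₗ W.delta) t := by
    intro t
    induction t using TensorProduct.induction_on with
    | zero => simp
    | tmul y z => simp
    | add u v h1 h2 => simp only [map_add, h1, h2]
  show (tensorTensorTensorComm k H H H H)
      (TensorProduct.map W.delta W.delta (TensorProduct.map LinearMap.id W.lam (W.delta x))) = _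
  rw [h1 (W.delta x)]
  have := LinearMap.congr_fun h2 (TensorProduct.map W.delta W.delta (W.delta x))
  simp only [comp_apply, LinearEquiv.coe_coe] at this
  rw [this, exch W hco x, h3 (W.delta x)]

lemma xiPiL : W.mu ∘ₗ TensorProduct.map LinearMap.id W.lam ∘ₗ W.delta
    = W.toWeakBialgebraStr.piL := W.antipode_r

/-- R1 : `σΛ ∗ σiΛ = e`. -/
lemma R1 (hco : Cocomm W.toWeakBialgebraStr)
    (hreg : RegPair (delta2 W.toWeakBialgebraStr) (u2 W.toWeakBialgebraStr φ) σ σi) (x : H) :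
    mulT (sigL W σ) (sigL W σi) (W.delta x) = eS W φ x := by
  have h1 : mulT (sigL W σ) (sigL W σi)
      = mulT σ σi ∘ₗ TensorProduct.map (TensorProduct.map LinearMap.id W.lam ∘ₗ W.delta)
          (TensorProduct.map LinearMap.id W.lam ∘ₗ W.delta) := mulT_comp_map _ _ _ _
  rw [LinearMap.congr_fun h1 (W.delta x)]
  simp only [comp_apply]
  rw [← XIcomul W hco x]
  have h2 := LinearMap.congr_fun hreg.1 (TensorProduct.map LinearMap.id W.lam (W.delta x))
  have h3 : mulT σ σi (delta2 W.toWeakBialgebraStr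
      (TensorProduct.map LinearMap.id W.lam (W.delta x)))
      = convOn (delta2 W.toWeakBialgebraStr) σ σi
          (TensorProduct.map LinearMap.id W.lam (W.delta x)) := rfl
  rw [h3, h2]
  show u1 φ (W.mu (TensorProduct.map LinearMap.id W.lam (W.delta x))) = _
  rw [show W.mu (TensorProduct.map LinearMap.id W.lam (W.delta x))
      = W.toWeakBialgebraStr.piL x from LinearMap.congr_fun (xiPiL W) x]
  rfl

/-- R2 : `e ∗ σΛ = σΛ`. -/
lemma R2 (hco : Cocomm W.toWeakBialgebraStr)
    (hreg : RegPair (delta2 W.toWeakBialgebraStr) (u2 W.toWeakBialgebraStr φ) σ σi) (x : H) :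
    mulT (eS W φ) (sigL W σ) (W.delta x) = sigL W σ x := by
  have hu2 : convOn (delta2 W.toWeakBialgebraStr) (u2 W.toWeakBialgebraStr φ) σ = σ := by
    have := hreg.2.2.1
    rwa [hreg.1] at this
  have h1 : mulT (eS W φ) (sigL W σ)
      = mulT (u2 W.toWeakBialgebraStr φ) σ
          ∘ₗ TensorProduct.map (TensorProduct.map LinearMap.id W.lam ∘ₗ W.delta)
            (TensorProduct.map LinearMap.id W.lam ∘ₗ W.delta) := by
    have he : eS W φ = u2 W.toWeakBialgebraStr φ
        ∘ₗ (TensorProduct.map LinearMap.id W.lam ∘ₗ W.delta) := by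
      show u1 φ ∘ₗ W.toWeakBialgebraStr.piL = _
      rw [← xiPiL W]
      rfl
    rw [he]
    exact mulT_comp_map _ _ _ _
  rw [LinearMap.congr_fun h1 (W.delta x)]
  simp only [comp_apply]
  rw [← XIcomul W hco x]
  have h2 := LinearMap.congr_fun hu2 (TensorProduct.map LinearMap.id W.lam (W.delta x))
  exact h2

/-- R2' : `σΛ ∗ e = σΛ` (uses centrality and cocommutativity). -/
lemma R2' (hφ : IsWMA W.toWeakBialgebraStr φ) (hco : Cocomm W.toWeakBialgebraStr)
    (hreg : RegPair (delta2 W.toWeakBialgebraStr) (u2 W.toWeakBialgebraStr φ) σ σi) (x : H) :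
    mulT (sigL W σ) (eS W φ) (W.delta x) = sigL W σ x := by
  have h1 : mulT (sigL W σ) (eS W φ)
      = mulT (eS W φ) (sigL W σ) ∘ₗ (TensorProduct.comm k H H).toLinearMap := by
    apply TensorProduct.ext'
    intro a b
    simp only [mulT_tmul, comp_apply, LinearEquiv.coe_coe, comm_tmul]
    exact (e_central W φ hφ hco b (sigL W σ a)).symm
  rw [LinearMap.congr_fun h1 (W.delta x)]
  simp only [comp_apply, LinearEquiv.coe_coe]
  rw [hco x]
  exact R2 W φ σ σi hco hreg x

/-- general merging lemma. -/
lemma GM (hφ : IsWMA W.toWeakBialgebraStr φ) (hco : Cocomm W.toWeakBialgebraStr)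
    (g₁ g₂ : H →ₗ[k] B) (x : H) :
    mulT (φ ∘ₗ TensorProduct.map LinearMap.id g₁ ∘ₗ W.delta)
        (φ ∘ₗ TensorProduct.map LinearMap.id g₂ ∘ₗ W.delta) (W.delta x)
      = φ (TensorProduct.map LinearMap.id (mulT g₁ g₂ ∘ₗ W.delta) (W.delta x)) := by
  have b1 : ∀ t : H ⊗[k] H,
      mulT (φ ∘ₗ TensorProduct.map LinearMap.id g₁ ∘ₗ W.delta)
        (φ ∘ₗ TensorProduct.map LinearMap.id g₂ ∘ₗ W.delta) t
        = (LinearMap.mul' k B ∘ₗ TensorProduct.map (φ ∘ₗ TensorProduct.map LinearMap.id g₁)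
            (φ ∘ₗ TensorProduct.map LinearMap.id g₂))
            (TensorProduct.map W.delta W.delta t) := by
    intro t
    induction t using TensorProduct.induction_on with
    | zero => simp
    | tmul y z => rfl
    | add u v h1 h2 => simp only [map_add, h1, h2]
  rw [b1 (W.delta x), ← exch W hco x]
  have b2 : ∀ t : H ⊗[k] H,
      (LinearMap.mul' k B ∘ₗ TensorProduct.map (φ ∘ₗ TensorProduct.map LinearMap.id g₁)
          (φ ∘ₗ TensorProduct.map LinearMap.id g₂))
          (tensorTensorTensorComm k H H H H (TensorProduct.map W.delta W.delta t))
        = φ (TensorProduct.map LinearMap.id (mulT g₁ g₂ ∘ₗ W.delta) t) := by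
    intro t
    induction t using TensorProduct.induction_on with
    | zero => simp
    | tmul c d =>
        have inner : ∀ S : H ⊗[k] H,
            (LinearMap.mul' k B ∘ₗ TensorProduct.map (φ ∘ₗ TensorProduct.map LinearMap.id g₁)
              (φ ∘ₗ TensorProduct.map LinearMap.id g₂))
              (tensorTensorTensorComm k H H H H (W.delta c ⊗ₜ[k] S))
              = φ (c ⊗ₜ[k] mulT g₁ g₂ S) := by
          intro S
          induction S using TensorProduct.induction_on with
          | zero => simp
          | tmul d1 d2 =>
              have inner2 : ∀ U : H ⊗[k] H,
                  (LinearMap.mul' k B ∘ₗ TensorProduct.map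
                    (φ ∘ₗ TensorProduct.map LinearMap.id g₁)
                    (φ ∘ₗ TensorProduct.map LinearMap.id g₂))
                    (tensorTensorTensorComm k H H H H (U ⊗ₜ[k] (d1 ⊗ₜ[k] d2)))
                    = mulT (phiR φ (g₁ d1)) (phiR φ (g₂ d2)) U := by
                intro U
                induction U using TensorProduct.induction_on with
                | zero => simp
                | tmul c1 c2 => simp
                | add u v h1 h2 => simp only [add_tmul, map_add, h1, h2]
              rw [inner2 (W.delta c), ← measT W φ hφ.1]
              rfl
          | add u v h1 h2 => simp only [tmul_add, map_add, mul_add, h1, h2]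
        exact inner (W.delta d)
    | add u v h1 h2 => simp only [map_add, h1, h2]
  exact b2 (W.delta x)

/-- convolution associativity on `Hom(H,B)`. -/
lemma convB_assoc (f g h : H →ₗ[k] B) (x : H) :
    mulT (mulT f g ∘ₗ W.delta) h (W.delta x) = mulT f (mulT g h ∘ₗ W.delta) (W.delta x) := by
  have step1 : ∀ t : H ⊗[k] H,
      mulT (mulT f g ∘ₗ W.delta) h t
        = (LinearMap.mul' k B ∘ₗ TensorProduct.map (LinearMap.mul' k B) h
            ∘ₗ rTensor H (TensorProduct.map f g)) (rTensor H W.delta t) := by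
    intro t
    induction t using TensorProduct.induction_on with
    | zero => simp
    | tmul a b => rfl
    | add u v h1 h2 => simp only [map_add, h1, h2]
  have step4 : ∀ t : H ⊗[k] H,
      (LinearMap.mul' k B ∘ₗ TensorProduct.map f (LinearMap.mul' k B)
          ∘ₗ lTensor H (TensorProduct.map g h)) (lTensor H W.delta t)
        = mulT f (mulT g h ∘ₗ W.delta) t := by
    intro t
    induction t using TensorProduct.induction_on with
    | zero => simp
    | tmul a b => rfl
    | add u v h1 h2 => simp only [map_add, h1, h2]
  have key : (LinearMap.mul' k B ∘ₗ TensorProduct.map (LinearMap.mul' k B) h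
        ∘ₗ rTensor H (TensorProduct.map f g))
        ∘ₗ (TensorProduct.assoc k H H H).symm.toLinearMap
      = LinearMap.mul' k B ∘ₗ TensorProduct.map f (LinearMap.mul' k B)
          ∘ₗ lTensor H (TensorProduct.map g h) := by
    apply ext3R
    intro x y z
    simp [mulT, mul_assoc]
  rw [step1 (W.delta x), ← step4 (W.delta x)]
  rw [show rTensor H W.delta (W.delta x)
      = (TensorProduct.assoc k H H H).symm (lTensor H W.delta (W.delta x)) from W.coassoc x]
  exact LinearMap.congr_fun key (lTensor H W.delta (W.delta x))

end WK11
namespace WK11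
open WK TensorProduct LinearMap

variable {k : Type} [CommRing k] {H : Type} [AddCommGroup H] [Module k H]
    {B : Type} [Ring B] [Algebra k B]
variable (W : WeakHopfStr k H) (φ : H ⊗[k] B →ₗ[k] B) (σ σi : H ⊗[k] H →ₗ[k] B)

lemma Pmap_eval (y : H) (c' : B) :
    Pmap W.toWeakBialgebraStr φ (y ⊗ₜ[k] c')
      = TensorProduct.map (phiR φ c') LinearMap.id (W.delta y) := by
  have key : ∀ s : H ⊗[k] H,
      rTensor H φ ((TensorProduct.assoc k H B H).symm
        (lTensor H (TensorProduct.comm k H B)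
          ((TensorProduct.assoc k H H B) (s ⊗ₜ[k] c'))))
        = TensorProduct.map (phiR φ c') LinearMap.id s := by
    intro s
    induction s using TensorProduct.induction_on with
    | zero => simp
    | tmul p q => simp
    | add u v h1 h2 => simp only [add_tmul, tmul_add, map_add, mul_add, add_mul, h1, h2]
  show rTensor H φ _ = _
  exact key (W.delta y)

lemma Pmap_lam (hco : Cocomm W.toWeakBialgebraStr) (z : H) (b : B) :
    Pmap W.toWeakBialgebraStr φ (W.lam z ⊗ₜ[k] b)
      = TensorProduct.map (phiR φ b ∘ₗ W.lam) W.lam (W.delta z) := by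
  rw [Pmap_eval W φ, deltaLam W hco]
  have : ∀ t : H ⊗[k] H,
      TensorProduct.map (phiR φ b) LinearMap.id (TensorProduct.map W.lam W.lam t)
        = TensorProduct.map (phiR φ b ∘ₗ W.lam) W.lam t := by
    intro t
    induction t using TensorProduct.induction_on with
    | zero => simp
    | tmul p q => simp
    | add u v h1 h2 => simp only [map_add, h1, h2]
  exact this (W.delta z)

/-- `AA b y = Σ φ(y₁ ⊗ φ(λ(y₂) ⊗ b))`. -/
noncomputable def AA (b : B) : H →ₗ[k] B :=
  φ ∘ₗ TensorProduct.map LinearMap.id (phiR φ b ∘ₗ W.lam) ∘ₗ W.delta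

/-- `CC b y = φ(Π^L(y) ⊗ b)`. -/
noncomputable def CC (b : B) : H →ₗ[k] B :=
  phiR φ b ∘ₗ W.toWeakBialgebraStr.piL

/-- pullback of the twisted condition. -/
lemma TPB (hco : Cocomm W.toWeakBialgebraStr) (htw : IsTwisted W.toWeakBialgebraStr φ σ)
    (x : H) (b : B) :
    mulT (AA W φ b) (sigL W σ) (W.delta x) = mulT (sigL W σ) (CC W φ b) (W.delta x) := by
  set RESTL : (H ⊗[k] H) ⊗[k] (H ⊗[k] H) →ₗ[k] B :=
    LinearMap.mul' k B ∘ₗ TensorProduct.map φ σ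
      ∘ₗ TensorProduct.map (TensorProduct.map LinearMap.id (phiR φ b ∘ₗ W.lam))
          (TensorProduct.map LinearMap.id W.lam) with hRESTL
  set RESTR : (H ⊗[k] H) ⊗[k] (H ⊗[k] H) →ₗ[k] B :=
    LinearMap.mul' k B ∘ₗ TensorProduct.map σ (phiR φ b ∘ₗ W.mu)
      ∘ₗ TensorProduct.map (TensorProduct.map LinearMap.id W.lam)
          (TensorProduct.map LinearMap.id W.lam) with hRESTR
  -- step A: identify the two sides with RESTL/RESTR applied to (Δ⊗Δ)Δ
  have stepL : ∀ t : H ⊗[k] H,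
      RESTL (TensorProduct.map W.delta W.delta t) = mulT (AA W φ b) (sigL W σ) t := by
    intro t
    induction t using TensorProduct.induction_on with
    | zero => simp
    | tmul y z => rfl
    | add u v h1 h2 => simp only [map_add, h1, h2]
  have stepR : ∀ t : H ⊗[k] H,
      RESTR (TensorProduct.map W.delta W.delta t) = mulT (sigL W σ) (CC W φ b) t := by
    intro t
    induction t using TensorProduct.induction_on with
    | zero => simp
    | tmul y z =>
        simp only [hRESTR, comp_apply, TensorProduct.map_tmul, mulT_tmul,
          LinearMap.mul'_apply]
        congr 1
        show φ ((W.mu ∘ₗ TensorProduct.map LinearMap.id W.lam ∘ₗ W.delta) z ⊗ₜ[k] b) = _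
        rw [xiPiL W]
        rfl
    | add u v h1 h2 => simp only [map_add, h1, h2]
  -- step B: the twisted condition gives RESTL∘ttc = RESTR∘ttc on (Δ⊗Δ)Δ - values
  have HTW := LinearMap.congr_fun htw
    (lTensor H (((TensorProduct.mk k H B).flip b) ∘ₗ W.lam) (W.delta x))
  -- evaluate both sides of HTW
  have evalL : ∀ t : H ⊗[k] H,
      (LinearMap.mul' k B ∘ₗ lTensor B σ ∘ₗ (TensorProduct.assoc k B H H).toLinearMap
        ∘ₗ rTensor H (Pmap W.toWeakBialgebraStr φ)
        ∘ₗ (TensorProduct.assoc k H B H).symm.toLinearMap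
        ∘ₗ lTensor H (Pmap W.toWeakBialgebraStr φ))
        (lTensor H (((TensorProduct.mk k H B).flip b) ∘ₗ W.lam) t)
        = RESTL (tensorTensorTensorComm k H H H H (TensorProduct.map W.delta W.delta t)) := by
    intro t
    induction t using TensorProduct.induction_on with
    | zero => simp
    | tmul y z =>
        simp only [comp_apply, lTensor_tmul, flip_apply, mk_apply, LinearEquiv.coe_coe,
          TensorProduct.map_tmul]
        rw [Pmap_lam W φ hco]
        have inner1 : ∀ s : H ⊗[k] H,
            (LinearMap.mul' k B) ((lTensor B σ) ((TensorProduct.assoc k B H H)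
              ((rTensor H (Pmap W.toWeakBialgebraStr φ))
                ((TensorProduct.assoc k H B H).symm
                  (y ⊗ₜ[k] TensorProduct.map (phiR φ b ∘ₗ W.lam) W.lam s)))))
              = RESTL (tensorTensorTensorComm k H H H H (W.delta y ⊗ₜ[k] s)) := by
          intro s
          induction s using TensorProduct.induction_on with
          | zero => simp
          | tmul c d =>
              simp only [TensorProduct.map_tmul, comp_apply, LinearEquiv.coe_coe,
                assoc_symm_tmul, rTensor_tmul]
              rw [Pmap_eval W φ]
              have inner2 : ∀ U : H ⊗[k] H,
                  (LinearMap.mul' k B) ((lTensor B σ) ((TensorProduct.assoc k B H H)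
                    ((TensorProduct.map (phiR φ (φ (W.lam c ⊗ₜ[k] b))) LinearMap.id U)
                      ⊗ₜ[k] W.lam d)))
                    = RESTL (tensorTensorTensorComm k H H H H (U ⊗ₜ[k] (c ⊗ₜ[k] d))) := by
                intro U
                induction U using TensorProduct.induction_on with
                | zero => simp
                | tmul p q => simp [hRESTL]
                | add u v h1 h2 => simp only [add_tmul, tmul_add, map_add, mul_add, add_mul, h1, h2]
              exact inner2 (W.delta y)
          | add u v h1 h2 => simp only [add_tmul, tmul_add, map_add, mul_add, add_mul, h1, h2]
        exact inner1 (W.delta z)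
    | add u v h1 h2 => simp only [map_add, h1, h2]
  have evalR : ∀ t : H ⊗[k] H,
      (LinearMap.mul' k B ∘ₗ lTensor B φ ∘ₗ (TensorProduct.assoc k B H B).toLinearMap
        ∘ₗ rTensor B (Fmap W.toWeakBialgebraStr σ)
        ∘ₗ (TensorProduct.assoc k H H B).symm.toLinearMap)
        (lTensor H (((TensorProduct.mk k H B).flip b) ∘ₗ W.lam) t)
        = RESTR (tensorTensorTensorComm k H H H H (TensorProduct.map W.delta W.delta t)) := by
    intro t
    induction t using TensorProduct.induction_on with
    | zero => simp
    | tmul y z =>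
        simp only [comp_apply, lTensor_tmul, flip_apply, mk_apply, LinearEquiv.coe_coe,
          assoc_symm_tmul, rTensor_tmul]
        have hF : Fmap W.toWeakBialgebraStr σ (y ⊗ₜ[k] W.lam z)
            = TensorProduct.map σ W.mu (tensorTensorTensorComm k H H H H
                (W.delta y ⊗ₜ[k] TensorProduct.map W.lam W.lam (W.delta z))) := by
          show TensorProduct.map σ W.mu (tensorTensorTensorComm k H H H H
            (W.delta y ⊗ₜ[k] W.delta (W.lam z))) = _
          rw [deltaLam W hco]
        rw [hF]
        have inner1 : ∀ (U s : H ⊗[k] H),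
            (LinearMap.mul' k B) ((lTensor B φ) ((TensorProduct.assoc k B H B)
              ((TensorProduct.map σ W.mu (tensorTensorTensorComm k H H H H
                (U ⊗ₜ[k] TensorProduct.map W.lam W.lam s))) ⊗ₜ[k] b)))
              = RESTR (tensorTensorTensorComm k H H H H (U ⊗ₜ[k] s)) := by
          intro U s
          induction U using TensorProduct.induction_on with
          | zero => simp
          | tmul p q =>
              induction s using TensorProduct.induction_on with
              | zero => simp
              | tmul c d => simp [hRESTR]
              | add u v h1 h2 => simp only [add_tmul, tmul_add, map_add, mul_add, add_mul, h1, h2]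
          | add u v h1 h2 => simp only [add_tmul, tmul_add, map_add, mul_add, add_mul, h1, h2]
        exact inner1 (W.delta y) (W.delta z)
    | add u v h1 h2 => simp only [map_add, h1, h2]
  rw [evalL (W.delta x), evalR (W.delta x), exch W hco x] at HTW
  rw [← stepL (W.delta x), ← stepR (W.delta x)]
  exact HTW

end WK11
namespace WK11
open WK TensorProduct LinearMap

variable {k : Type} [CommRing k] {H : Type} [AddCommGroup H] [Module k H]
    {B : Type} [Ring B] [Algebra k B]
variable (W : WeakHopfStr k H) (φ : H ⊗[k] B →ₗ[k] B) (σ σi : H ⊗[k] H →ₗ[k] B)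

/-- `sandw f g ((x⊗y)⊗c) = f x * (c * g y)`. -/
noncomputable def sandw (f g : H →ₗ[k] B) : (H ⊗[k] H) ⊗[k] B →ₗ[k] B :=
  mulT f (LinearMap.mul' k B ∘ₗ (TensorProduct.comm k B B).toLinearMap ∘ₗ rTensor B g)
    ∘ₗ (TensorProduct.assoc k H H B).toLinearMap

@[simp] lemma sandw_tmul (f g : H →ₗ[k] B) (x y : H) (c : B) :
    sandw f g ((x ⊗ₜ[k] y) ⊗ₜ[k] c) = f x * (c * g y) := by
  simp [sandw]

lemma eS_eq (hφ : IsWMA W.toWeakBialgebraStr φ) :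
    eS W φ = φ ∘ₗ TensorProduct.map LinearMap.id (u1 φ ∘ₗ W.lam) ∘ₗ W.delta := by
  apply LinearMap.ext; intro x
  show u1 φ (W.toWeakBialgebraStr.piL x) = _
  rw [← LinearMap.congr_fun (xiPiL W) x]
  have step : ∀ t : H ⊗[k] H,
      u1 φ (W.mu (TensorProduct.map LinearMap.id W.lam t))
        = φ (TensorProduct.map LinearMap.id (u1 φ ∘ₗ W.lam) t) := by
    intro t
    induction t using TensorProduct.induction_on with
    | zero => simp
    | tmul a c => simp [hφ.2.2 a (W.lam c)]
    | add u v h1 h2 => simp only [map_add, h1, h2]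
  exact (step (W.delta x)).trans rfl

/-- PB1 : `Ã ⋆ M_e = Ã`. -/
lemma PB1 (hφ : IsWMA W.toWeakBialgebraStr φ) (hco : Cocomm W.toWeakBialgebraStr)
    (x : H) (c : B) :
    mulT (AA W φ c) (eS W φ) (W.delta x) = AA W φ c x := by
  rw [eS_eq W φ hφ]
  have := GM W φ hφ hco (phiR φ c ∘ₗ W.lam) (u1 φ ∘ₗ W.lam) x
  rw [show AA W φ c = φ ∘ₗ TensorProduct.map LinearMap.id (phiR φ c ∘ₗ W.lam) ∘ₗ W.delta
    from rfl]
  rw [this]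
  have inner : mulT (phiR φ c ∘ₗ W.lam) (u1 φ ∘ₗ W.lam) ∘ₗ W.delta = phiR φ c ∘ₗ W.lam := by
    apply LinearMap.ext; intro y
    show mulT (phiR φ c ∘ₗ W.lam) (u1 φ ∘ₗ W.lam) (W.delta y) = φ (W.lam y ⊗ₜ[k] c)
    rw [mulT_comp_map, comp_apply, ← deltaLam W hco, W2r W φ hφ]
  rw [inner]
  rfl

lemma R1M (hco : Cocomm W.toWeakBialgebraStr)
    (hreg : RegPair (delta2 W.toWeakBialgebraStr) (u2 W.toWeakBialgebraStr φ) σ σi) :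
    eS W φ = mulT (sigL W σ) (sigL W σi) ∘ₗ W.delta :=
  LinearMap.ext fun x => (R1 W φ σ σi hco hreg x).symm

/-- the main pullback identity (PB). -/
lemma PB (hφ : IsWMA W.toWeakBialgebraStr φ) (hco : Cocomm W.toWeakBialgebraStr)
    (hreg : RegPair (delta2 W.toWeakBialgebraStr) (u2 W.toWeakBialgebraStr φ) σ σi)
    (htw : IsTwisted W.toWeakBialgebraStr φ σ) (w : H) (c : B) :
    AA W φ c w = sandw (sigL W σ) (sigL W σi) (W.delta w ⊗ₜ[k] c) := by
  rw [← PB1 W φ hφ hco w c, R1M W φ σ σi hco hreg]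
  rw [show mulT (AA W φ c) (mulT (sigL W σ) (sigL W σi) ∘ₗ W.delta) (W.delta w)
      = mulT (mulT (AA W φ c) (sigL W σ) ∘ₗ W.delta) (sigL W σi) (W.delta w) from
    (convB_assoc W (AA W φ c) (sigL W σ) (sigL W σi) w).symm]
  have hTPBm : mulT (AA W φ c) (sigL W σ) ∘ₗ W.delta
      = mulT (sigL W σ) (CC W φ c) ∘ₗ W.delta :=
    LinearMap.ext fun y => TPB W φ σ hco htw y c
  rw [hTPBm]
  have hCC : mulT (sigL W σ) (CC W φ c) ∘ₗ W.delta = mulRight k c ∘ₗ sigL W σ := by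
    apply LinearMap.ext; intro y
    have hCCe : CC W φ c = mulRight k c ∘ₗ eS W φ := by
      apply LinearMap.ext; intro z
      show φ (W.toWeakBialgebraStr.piL z ⊗ₜ[k] c) = _
      rw [piL_act_left W φ hφ]
      rfl
    show mulT (sigL W σ) (CC W φ c) (W.delta y) = sigL W σ y * c
    rw [hCCe]
    have hmr : mulT (sigL W σ) (mulRight k c ∘ₗ eS W φ)
        = mulRight k c ∘ₗ mulT (sigL W σ) (eS W φ) := by
      apply TensorProduct.ext'; intro a b'
      simp [mul_assoc]
    rw [LinearMap.congr_fun hmr (W.delta y)]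
    show mulT (sigL W σ) (eS W φ) (W.delta y) * c = _
    rw [R2' W φ σ σi hφ hco hreg y]
  rw [hCC]
  have final : mulT (mulRight k c ∘ₗ sigL W σ) (sigL W σi)
      = sandw (sigL W σ) (sigL W σi) ∘ₗ (TensorProduct.mk k (H ⊗[k] H) B).flip c := by
    apply TensorProduct.ext'; intro a b'
    simp [mul_assoc]
  rw [LinearMap.congr_fun final (W.delta w)]
  rfl

end WK11
namespace WK11
open WK TensorProduct LinearMap

variable {k : Type} [CommRing k] {H : Type} [AddCommGroup H] [Module k H]
    {B : Type} [Ring B] [Algebra k B]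
variable (W : WeakHopfStr k H) (φ : H ⊗[k] B →ₗ[k] B) (σ σi : H ⊗[k] H →ₗ[k] B)

/-- the candidate inverse `φ† (x⊗b) = Σ φ(λ(x₁) ⊗ σi(x₂⊗λ(x₃))·b·σ(x₄⊗λ(x₅)))`. -/
noncomputable def phid : H ⊗[k] B →ₗ[k] B :=
  φ ∘ₗ TensorProduct.map W.lam (sandw (sigL W σi) (sigL W σ))
    ∘ₗ (TensorProduct.assoc k H (H ⊗[k] H) B).toLinearMap
    ∘ₗ rTensor B (lTensor H W.delta ∘ₗ W.delta)

/-- `AAMcore ((w₁⊗w₂)⊗c) = φ(w₁ ⊗ φ(λ(w₂)⊗c))`. -/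
noncomputable def AAMcore : (H ⊗[k] H) ⊗[k] B →ₗ[k] B :=
  φ ∘ₗ lTensor H (φ ∘ₗ rTensor B W.lam) ∘ₗ (TensorProduct.assoc k H H B).toLinearMap

lemma AAMcore_delta (w : H) (c : B) :
    AAMcore W φ (W.delta w ⊗ₜ[k] c) = AA W φ c w := by
  have key : ∀ s : H ⊗[k] H,
      AAMcore W φ (s ⊗ₜ[k] c)
        = φ (TensorProduct.map LinearMap.id (phiR φ c ∘ₗ W.lam) s) := by
    intro s
    induction s using TensorProduct.induction_on with
    | zero => simp
    | tmul w1 w2 => simp [AAMcore]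
    | add u v h1 h2 => simp only [add_tmul, map_add, h1, h2]
  exact key (W.delta w)

lemma main (hφ : IsWMA W.toWeakBialgebraStr φ) (hco : Cocomm W.toWeakBialgebraStr)
    (hreg : RegPair (delta2 W.toWeakBialgebraStr) (u2 W.toWeakBialgebraStr φ) σ σi)
    (htw : IsTwisted W.toWeakBialgebraStr φ σ) :
    wedgeOn W.toWeakBialgebraStr.delta φ (phid W φ σ σi) = wbar (u1 φ) := by
  apply TensorProduct.ext'
  intro x b
  have hRHS : wbar (u1 φ) (x ⊗ₜ[k] b) = u1 φ x * b := by
    simp [wbar]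
  rw [hRHS]
  have hL : wedgeOn W.toWeakBialgebraStr.delta φ (phid W φ σ σi) (x ⊗ₜ[k] b)
      = φ (lTensor H (phid W φ σ σi)
          ((TensorProduct.assoc k H H B) (W.delta x ⊗ₜ[k] b))) := by
    simp [wedgeOn]
  rw [hL]
  -- step B
  have stepB : ∀ t : H ⊗[k] H,
      φ (lTensor H (phid W φ σ σi) ((TensorProduct.assoc k H H B) (t ⊗ₜ[k] b)))
        = (φ ∘ₗ TensorProduct.map LinearMap.id
            (phid W φ σ σi ∘ₗ (TensorProduct.mk k H B).flip b)) t := by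
    intro t
    induction t using TensorProduct.induction_on with
    | zero => simp
    | tmul y z => simp
    | add u v h1 h2 => simp only [add_tmul, map_add, h1, h2]
  rw [stepB (W.delta x)]
  -- abbreviations
  set M3 : (H ⊗[k] H) ⊗[k] B →ₗ[k] B := sandw (sigL W σi) (sigL W σ) with hM3
  set INNER : H ⊗[k] (H ⊗[k] H) →ₗ[k] B :=
    φ ∘ₗ TensorProduct.map W.lam (M3 ∘ₗ (TensorProduct.mk k (H ⊗[k] H) B).flip b) with hINNER
  -- step C
  have stepC : phid W φ σ σi ∘ₗ (TensorProduct.mk k H B).flip b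
      = INNER ∘ₗ (lTensor H W.delta ∘ₗ W.delta) := by
    apply LinearMap.ext; intro z
    have key : ∀ U : H ⊗[k] (H ⊗[k] H),
        φ (TensorProduct.map W.lam M3 ((TensorProduct.assoc k H (H ⊗[k] H) B) (U ⊗ₜ[k] b)))
          = INNER U := by
      intro U
      induction U using TensorProduct.induction_on with
      | zero => simp
      | tmul u1' V => simp [hINNER]
      | add u v h1 h2 => simp only [add_tmul, map_add, h1, h2]
    show phid W φ σ σi (z ⊗ₜ[k] b) = INNER (lTensor H W.delta (W.delta z))
    rw [show phid W φ σ σi (z ⊗ₜ[k] b)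
        = φ (TensorProduct.map W.lam M3 ((TensorProduct.assoc k H (H ⊗[k] H) B)
            ((lTensor H W.delta (W.delta z)) ⊗ₜ[k] b))) from rfl]
    exact key _
  rw [stepC]
  -- fuse the composition into the second tensor slot
  have fuse : ∀ t : H ⊗[k] H,
      (φ ∘ₗ TensorProduct.map LinearMap.id (INNER ∘ₗ (lTensor H W.delta ∘ₗ W.delta))) t
        = (φ ∘ₗ TensorProduct.map LinearMap.id INNER)
            (lTensor H (lTensor H W.delta ∘ₗ W.delta) t) := by
    intro t
    induction t using TensorProduct.induction_on with
    | zero => simp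
    | tmul y z => rfl
    | add u v h1 h2 => simp only [map_add, h1, h2]
  rw [fuse (W.delta x)]
  -- now we are at QL' (D4R x)
  set QL' : H ⊗[k] (H ⊗[k] (H ⊗[k] H)) →ₗ[k] B :=
    φ ∘ₗ TensorProduct.map LinearMap.id INNER with hQL
  set QM : (H ⊗[k] H) ⊗[k] (H ⊗[k] H) →ₗ[k] B :=
    AAMcore W φ ∘ₗ TensorProduct.map LinearMap.id
      (M3 ∘ₗ (TensorProduct.mk k (H ⊗[k] H) B).flip b) with hQM
  have EQM : QM ∘ₗ (TensorProduct.assoc k H H (H ⊗[k] H)).symm.toLinearMap = QL' := by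
    apply TensorProduct.ext'
    intro x1 t
    induction t using TensorProduct.induction_on with
    | zero => simp
    | tmul x2 u =>
        induction u using TensorProduct.induction_on with
        | zero => simp
        | tmul x3 x4 => simp [hQM, hQL, hINNER, AAMcore]
        | add u1 u2 h1 h2 => simp only [tmul_add, map_add, h1, h2]
    | add u1 u2 h1 h2 => simp only [tmul_add, map_add, h1, h2]
  have hD4 : lTensor H (lTensor H W.delta ∘ₗ W.delta) (W.delta x)
      = lTensor H (lTensor H W.delta) (lTensor H W.delta (W.delta x)) := by
    rw [← lTensor_comp_apply]
  have vQL : QL' (lTensor H (lTensor H W.delta ∘ₗ W.delta) (W.delta x))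
      = QM (TensorProduct.map W.delta W.delta (W.delta x)) := by
    rw [hD4, mapdd W x, ← EQM]
    rfl
  show QL' (lTensor H (lTensor H W.delta ∘ₗ W.delta) (W.delta x)) = u1 φ x * b
  rw [vQL]
  -- apply (PB)
  set SAND2 : (H ⊗[k] H) ⊗[k] (H ⊗[k] H) →ₗ[k] B :=
    sandw (sigL W σ) (sigL W σi) ∘ₗ TensorProduct.map LinearMap.id
      (M3 ∘ₗ (TensorProduct.mk k (H ⊗[k] H) B).flip b) with hSAND2
  have stepG : ∀ t : H ⊗[k] H,
      QM (TensorProduct.map W.delta W.delta t)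
        = SAND2 (TensorProduct.map W.delta W.delta t) := by
    intro t
    induction t using TensorProduct.induction_on with
    | zero => simp
    | tmul w r =>
        show QM (W.delta w ⊗ₜ[k] W.delta r) = SAND2 (W.delta w ⊗ₜ[k] W.delta r)
        rw [hQM, hSAND2]
        simp only [comp_apply, TensorProduct.map_tmul, LinearMap.id_coe, id_eq, flip_apply,
          mk_apply]
        rw [AAMcore_delta W φ, PB W φ σ σi hφ hco hreg htw]
    | add u v h1 h2 => simp only [map_add, h1, h2]
  rw [stepG (W.delta x)]
  -- exchange and contract
  set F1 : H ⊗[k] H →ₗ[k] B := mulT (sigL W σ) (sigL W σi) with hF1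
  set F2 : H ⊗[k] H →ₗ[k] B :=
    mulLeft k b ∘ₗ mulT (sigL W σ) (sigL W σi) ∘ₗ (TensorProduct.comm k H H).toLinearMap
    with hF2
  have EKV : SAND2 ∘ₗ (tensorTensorTensorComm k H H H H).toLinearMap = mulT F1 F2 := by
    apply TensorProduct.ext_fourfold'
    intro c1 c2 d1 d2
    simp only [comp_apply, LinearEquiv.coe_coe, tensorTensorTensorComm_tmul, hSAND2, hF1, hF2,
      TensorProduct.map_tmul, LinearMap.id_coe, id_eq, flip_apply, mk_apply, sandw_tmul,
      mulT_tmul, comm_tmul, mulLeft_apply, hM3]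
    simp [mul_assoc]
  have vexch : SAND2 (TensorProduct.map W.delta W.delta (W.delta x))
      = mulT F1 F2 (TensorProduct.map W.delta W.delta (W.delta x)) := by
    conv_lhs => rw [← exch W hco x]
    have := LinearMap.congr_fun EKV (TensorProduct.map W.delta W.delta (W.delta x))
    simp only [comp_apply, LinearEquiv.coe_coe] at this
    rw [this]
  rw [vexch]
  have stepK : ∀ t : H ⊗[k] H,
      mulT F1 F2 (TensorProduct.map W.delta W.delta t)
        = mulT (eS W φ) (mulLeft k b ∘ₗ eS W φ) t := by
    intro t
    induction t using TensorProduct.induction_on with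
    | zero => simp
    | tmul c d =>
        simp only [TensorProduct.map_tmul, mulT_tmul, comp_apply, mulLeft_apply]
        rw [hF1, hF2]
        simp only [comp_apply, LinearEquiv.coe_coe]
        rw [R1 W φ σ σi hco hreg c, hco d, R1 W φ σ σi hco hreg d]
        rfl
    | add u v h1 h2 => simp only [map_add, h1, h2]
  rw [stepK (W.delta x)]
  have stepI : mulT (eS W φ) (mulLeft k b ∘ₗ eS W φ)
      = mulRight k b ∘ₗ mulT (eS W φ) (eS W φ) := by
    apply TensorProduct.ext'
    intro a c
    simp only [mulT_tmul, comp_apply, mulLeft_apply, mulRight_apply]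
    rw [show b * eS W φ c = eS W φ c * b from (e_central W φ hφ hco c b).symm, ← mul_assoc]
  rw [LinearMap.congr_fun stepI (W.delta x)]
  show mulT (eS W φ) (eS W φ) (W.delta x) * b = u1 φ x * b
  rw [R4 W φ hφ hco x]
  rw [show eS W φ x = u1 φ x from (u1_eq_e W φ hφ hco x).symm]

end WK11
open WK in
theorem statement11 {k : Type} [CommRing k] {H : Type} [AddCommGroup H] [Module k H]
    {B : Type} [Ring B] [Algebra k B]
    (W : WeakHopfStr k H) (hco : Cocomm W.toWeakBialgebraStr)
    (φ : H ⊗[k] B →ₗ[k] B) (hφ : IsWMA W.toWeakBialgebraStr φ)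
    (σ σi : H ⊗[k] H →ₗ[k] B)
    (hreg : RegPair (delta2 W.toWeakBialgebraStr) (u2 W.toWeakBialgebraStr φ) σ σi)
    (htw : IsTwisted W.toWeakBialgebraStr φ σ) :
    ∃ φd : H ⊗[k] B →ₗ[k] B,
      wedgeOn W.toWeakBialgebraStr.delta φ φd = wbar (u1 φ) :=
  ⟨WK11.phid W φ σ σi, WK11.main W φ σ σi hφ hco hreg htw⟩
end
end

section
/- Let H be a cocommutative weak Hopf algebra and (B,φ_B) a left weak H-module algebra such that φ_B is φ_B-invertible. Then for each n ≥ 1, the iterated action φ_B^{⊗n} = φ_B∘(H⊗φ_B^{⊗(n-1)}) is φ_B^{⊗n}-invertible, i.e., there exists φ_B^{⊗n†} : H^{⊗n}⊗B → B with φ_B^{⊗n} ∧ φ_B^{⊗n†} = μ_B∘(u_n⊗B). -/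
open TensorProduct LinearMap

noncomputable section

/-! Induction on `n`. Suppose `φ_Y ∧ φ_Y† = μ_B ∘ (u_Y ⊗ B)` and consider the action
`(h ⊗ y) ⊗ b ↦ φ (h ⊗ φ_Y (y ⊗ b))` of `H ⊗ Y`; the inverses are applied in the opposite order,
`(h ⊗ y) ⊗ b ↦ φ_Y† (y ⊗ φ† (h ⊗ b))`. The wedge product of the two is
`∑ φ (h₁ ⊗ u_Y(y) φ†(h₂ ⊗ b)) = ∑ φ (h₁ ⊗ u_Y(y)) φ (h₂ ⊗ φ†(h₃ ⊗ b)) = ∑ φ (h₁ ⊗ u_Y(y)) u₁(h₂) b`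
by the measuring property and coassociativity, and this is `φ (h ⊗ u_Y(y) 1) b = φ (h ⊗ u_Y(y)) b`,
again by the measuring property. For `Y = H^{⊗n}` the weak module algebra axiom
`u₁(x y) = φ (x ⊗ u₁(y))` identifies `φ (h ⊗ u_n(y))` with `u_{n+1}(h ⊗ y)`. -/

namespace WK

variable {k : Type} [CommRing k] {B : Type} [Ring B] [Algebra k B]

section Wedge

variable {X Y : Type} [AddCommGroup X] [Module k X] [AddCommGroup Y] [Module k Y]

/-- `phiPow φ (n + 1)` is by definition `tensorAction φ (phiPow φ n)`. -/
def tensorAction (f : X ⊗[k] B →ₗ[k] B) (g : Y ⊗[k] B →ₗ[k] B) : (X ⊗[k] Y) ⊗[k] B →ₗ[k] B :=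
  f ∘ₗ lTensor X g ∘ₗ (TensorProduct.assoc k X Y B).toLinearMap

def tensorActionDagger (fd : X ⊗[k] B →ₗ[k] B) (gd : Y ⊗[k] B →ₗ[k] B) :
    (X ⊗[k] Y) ⊗[k] B →ₗ[k] B :=
  gd ∘ₗ lTensor Y fd ∘ₗ (TensorProduct.assoc k Y X B).toLinearMap
    ∘ₗ rTensor B (TensorProduct.comm k X Y).toLinearMap

theorem wedgeOn_comp_flip_mk (D : X →ₗ[k] X ⊗[k] X) (f g : X ⊗[k] B →ₗ[k] B) (b : B) :
    wedgeOn D f g ∘ₗ (mk k X B).flip b = f ∘ₗ lTensor X (g ∘ₗ (mk k X B).flip b) ∘ₗ D := by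
  ext x
  simp only [wedgeOn, comp_apply, flip_apply, mk_apply, rTensor_tmul]
  induction D x with
  | zero => simp
  | tmul x₁ x₂ => simp
  | add t₁ t₂ h₁ h₂ => simp only [add_tmul, map_add, h₁, h₂]

theorem wedgeOn_deltaT_tensorAction_tmul (DX : X →ₗ[k] X ⊗[k] X) (DY : Y →ₗ[k] Y ⊗[k] Y)
    (f fd : X ⊗[k] B →ₗ[k] B) (g gd : Y ⊗[k] B →ₗ[k] B) (x : X) (y : Y) (b : B) :
    wedgeOn (deltaT DX DY) (tensorAction f g) (tensorActionDagger fd gd) ((x ⊗ₜ y) ⊗ₜ b) =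
      f (lTensor X (wedgeOn DY g gd ∘ₗ mk k Y B y ∘ₗ fd ∘ₗ (mk k X B).flip b) (DX x)) := by
  simp only [wedgeOn, deltaT, comp_apply, rTensor_tmul, map_tmul]
  induction DX x with
  | zero => simp
  | tmul x₁ x₂ =>
    simp only [lTensor_tmul, comp_apply, mk_apply, flip_apply, rTensor_tmul]
    induction DY y with
    | zero => simp
    | tmul y₁ y₂ => simp [tensorAction, tensorActionDagger]
    | add s₁ s₂ h₁ h₂ => simp only [tmul_add, add_tmul, map_add, h₁, h₂]
  | add t₁ t₂ h₁ h₂ => simp only [add_tmul, map_add, h₁, h₂]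

theorem convOn_mulRight (D : X →ₗ[k] X ⊗[k] X) (f g : X →ₗ[k] B) (b : B) :
    convOn D f (mulRight k b ∘ₗ g) = mulRight k b ∘ₗ convOn D f g := by
  ext x
  simp only [convOn, comp_apply]
  induction D x with
  | zero => simp
  | tmul x₁ x₂ => simp [mul_assoc]
  | add t₁ t₂ h₁ h₂ => simp only [map_add, h₁, h₂]

theorem wbar_comp_mk (ω : X →ₗ[k] B) (x : X) : wbar ω ∘ₗ mk k X B x = mulLeft k (ω x) := by
  ext b
  simp [wbar]

theorem wbar_comp_flip_mk (ω : X →ₗ[k] B) (b : B) :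
    wbar ω ∘ₗ (mk k X B).flip b = mulRight k b ∘ₗ ω := by
  ext x
  simp [wbar]

end Wedge

section Action

variable {H : Type} [AddCommGroup H] [Module k H] {W : WeakBialgebraStr k H}
  {φ : H ⊗[k] B →ₗ[k] B}

theorem IsMeasuring.comp_flip_mk_mul (hφ : IsMeasuring W φ) (b b' : B) :
    φ ∘ₗ (mk k H B).flip (b * b') =
      convOn W.delta (φ ∘ₗ (mk k H B).flip b) (φ ∘ₗ (mk k H B).flip b') := by
  ext h
  simp only [comp_apply, flip_apply, mk_apply, hφ h b b', convOn]
  induction W.delta h with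
  | zero => simp
  | tmul h₁ h₂ => simp
  | add t₁ t₂ h₁ h₂ => simp only [add_tmul, map_add, h₁, h₂]

theorem IsMeasuring.convOn_u1 (hφ : IsMeasuring W φ) (b : B) :
    convOn W.delta (φ ∘ₗ (mk k H B).flip b) (u1 φ) = φ ∘ₗ (mk k H B).flip b := by
  simpa [u1] using (hφ.comp_flip_mk_mul b 1).symm

theorem IsMeasuring.comp_lTensor_mulLeft (hφ : IsMeasuring W φ) (b : B) (d : H →ₗ[k] B) :
    φ ∘ₗ lTensor H (mulLeft k b ∘ₗ d) ∘ₗ W.delta =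
      convOn W.delta (φ ∘ₗ (mk k H B).flip b) (φ ∘ₗ lTensor H d ∘ₗ W.delta) := by
  set F : (H ⊗[k] H) ⊗[k] H →ₗ[k] B := mul' k B ∘ₗ TensorProduct.map (φ ∘ₗ (mk k H B).flip b)
    (φ ∘ₗ lTensor H d) ∘ₗ (TensorProduct.assoc k H H H).toLinearMap
  have hmeas : φ ∘ₗ lTensor H (mulLeft k b ∘ₗ d) = F ∘ₗ rTensor H W.delta := by
    refine TensorProduct.ext' fun h g ↦ ?_
    simp only [comp_apply, lTensor_tmul, mulLeft_apply, hφ h b (d g), rTensor_tmul, F]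
    induction W.delta h with
    | zero => simp
    | tmul h₁ h₂ => simp
    | add t₁ t₂ h₁ h₂ => simp only [add_tmul, map_add, h₁, h₂]
  have hcoassoc : rTensor H W.delta ∘ₗ W.delta =
      (TensorProduct.assoc k H H H).symm.toLinearMap ∘ₗ lTensor H W.delta ∘ₗ W.delta :=
    LinearMap.ext W.coassoc
  calc φ ∘ₗ lTensor H (mulLeft k b ∘ₗ d) ∘ₗ W.delta
      = F ∘ₗ rTensor H W.delta ∘ₗ W.delta := by rw [← comp_assoc, hmeas, comp_assoc]
    _ = F ∘ₗ (TensorProduct.assoc k H H H).symm.toLinearMap ∘ₗ lTensor H W.delta ∘ₗ W.delta := by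
      rw [hcoassoc]
    _ = _ := by
      ext h
      simp [F, convOn, comp_assoc]

theorem IsMeasuring.comp_lTensor_mulLeft_dagger (hφ : IsMeasuring W φ) {φd : H ⊗[k] B →ₗ[k] B}
    (hφd : wedgeOn W.delta φ φd = wbar (u1 φ)) (e b : B) :
    φ ∘ₗ lTensor H (mulLeft k e ∘ₗ φd ∘ₗ (mk k H B).flip b) ∘ₗ W.delta =
      mulRight k b ∘ₗ φ ∘ₗ (mk k H B).flip e := by
  rw [hφ.comp_lTensor_mulLeft, ← wedgeOn_comp_flip_mk, hφd, wbar_comp_flip_mk, convOn_mulRight,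
    hφ.convOn_u1]

theorem IsMeasuring.wedgeOn_tensorAction (hφ : IsMeasuring W φ) {φd : H ⊗[k] B →ₗ[k] B}
    (hφd : wedgeOn W.delta φ φd = wbar (u1 φ)) {Y : Type} [AddCommGroup Y] [Module k Y]
    (DY : Y →ₗ[k] Y ⊗[k] Y) {φY φYd : Y ⊗[k] B →ₗ[k] B} {uY : Y →ₗ[k] B}
    (hY : wedgeOn DY φY φYd = wbar uY) :
    wedgeOn (deltaT W.delta DY) (tensorAction φ φY) (tensorActionDagger φd φYd) =
      wbar (φ ∘ₗ lTensor H uY) := by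
  refine TensorProduct.ext_threefold fun h y b ↦ ?_
  rw [wedgeOn_deltaT_tensorAction_tmul, hY, ← comp_assoc, wbar_comp_mk]
  simpa [wbar] using congr($(hφ.comp_lTensor_mulLeft_dagger hφd (uY y) b) h)

theorem uPow_succ (hu : ∀ x y : H, u1 φ (W.mu (x ⊗ₜ[k] y)) = φ (x ⊗ₜ[k] u1 φ y)) (n : ℕ) :
    uPow W φ (n + 1) = φ ∘ₗ lTensor H (uPow W φ n) :=
  TensorProduct.ext' fun x y ↦ hu x (mPow W n y)

end Action

end WK

open WK in
theorem statement12_general {k : Type} [CommRing k] {H : Type} [AddCommGroup H] [Module k H]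
    {B : Type} [Ring B] [Algebra k B]
    (W : WeakHopfStr k H)
    (φ : H ⊗[k] B →ₗ[k] B) (hφ : IsWMA W.toWeakBialgebraStr φ)
    (hinv : ∃ φd : H ⊗[k] B →ₗ[k] B,
      wedgeOn W.toWeakBialgebraStr.delta φ φd = wbar (u1 φ)) :
    ∀ n : ℕ, ∃ φdn : (HpowM k H n).carrier ⊗[k] B →ₗ[k] B,
      wedgeOn (deltaPow W.toWeakBialgebraStr n) (phiPow φ n) φdn
        = wbar (uPow W.toWeakBialgebraStr φ n) := by
  obtain ⟨φd, hφd⟩ := hinv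
  intro n
  induction n with
  | zero => exact ⟨φd, hφd⟩
  | succ n ih =>
    obtain ⟨φdn, hφdn⟩ := ih
    refine ⟨tensorActionDagger φd φdn, ?_⟩
    rw [uPow_succ hφ.2.2]
    exact hφ.1.wedgeOn_tensorAction hφd _ hφdn

open WK in
theorem statement12 {k : Type} [CommRing k] {H : Type} [AddCommGroup H] [Module k H]
    {B : Type} [Ring B] [Algebra k B]
    (W : WeakHopfStr k H) (hco : Cocomm W.toWeakBialgebraStr)
    (φ : H ⊗[k] B →ₗ[k] B) (hφ : IsWMA W.toWeakBialgebraStr φ)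
    (hinv : ∃ φd : H ⊗[k] B →ₗ[k] B,
      wedgeOn W.toWeakBialgebraStr.delta φ φd = wbar (u1 φ)) :
    ∀ n : ℕ, ∃ φdn : (HpowM k H n).carrier ⊗[k] B →ₗ[k] B,
      wedgeOn (deltaPow W.toWeakBialgebraStr n) (phiPow φ n) φdn
        = wbar (uPow W.toWeakBialgebraStr φ n) :=
  statement12_general W φ hφ hinv
end
end

section
/- Let H be a cocommutative weak Hopf algebra, (B,φ_B) a left weak H-module algebra with φ_B being φ_B-invertible. Then ω ∈ Reg_{φ_B}(H^{⊗n},B) satisfies ω̄ ∧ φ_B^{⊗n} = ω̄^{op} ∧ φ_B^{⊗n} if and only if ω factors through the center of B (i.e., for all b, the image of ω commutes with b). -/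
open TensorProduct LinearMap

noncomputable section

/-!
Let `u = u₁ ∘ m` be the unit of `Reg_{φ_B}(H^{⊗n}, B)`. Regularity gives `ω ∗ u = ω`, and
`ω̄ ∧ ḡ` is the bar of `ω ∗ g`. If `u` is central, `ω̄^{op} ∧ ū` is likewise the op-bar of
`ω ∗ u`. Since `φ_B^{⊗n}` has a `∧`-inverse whose product with it is `ū`, `∧`-multiplying the
hypothesis on the right by that inverse gives `ω̄ = ω̄^{op}`.

Most of the work is showing that `u₁` is central. The weak bialgebra identity
`h₁ ⊗ Π^L(h₂) = 1₁h ⊗ 1₂` and the antipode give `u₁ ∘ Π^L = u₁`. Also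
`u₁(Π^L h) = ε(1₁h) u₁(1₂)`, and both `1₁ ⊗ u₁(1₂) c` and `1₁ ⊗ c u₁(1₂)` equal
`1₁ ⊗ φ(1₂ ⊗ c)`; the second equality is where cocommutativity is needed.
-/

namespace WK

variable {k : Type} [CommRing k] {H : Type} [AddCommGroup H] [Module k H]
variable {B : Type} [Ring B] [Algebra k B]

section HomProduct

variable {X : Type} [AddCommGroup X] [Module k X]

def IsCoassoc (D : X →ₗ[k] X ⊗[k] X) : Prop :=
  rTensor X D ∘ₗ D = (TensorProduct.assoc k X X X).symm.toLinearMap ∘ₗ lTensor X D ∘ₗ D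

def mulMap {M N : Type} [AddCommGroup M] [Module k M] [AddCommGroup N] [Module k N]
    (f : M →ₗ[k] B) (g : N →ₗ[k] B) : M ⊗[k] N →ₗ[k] B :=
  LinearMap.mul' k B ∘ₗ TensorProduct.map f g

@[simp] lemma mulMap_tmul {M N : Type} [AddCommGroup M] [Module k M] [AddCommGroup N]
    [Module k N] (f : M →ₗ[k] B) (g : N →ₗ[k] B) (x : M) (y : N) :
    mulMap f g (x ⊗ₜ[k] y) = f x * g y := by
  simp [mulMap]

lemma mulMap_comp_rTensor {M M' N : Type} [AddCommGroup M] [Module k M] [AddCommGroup M']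
    [Module k M'] [AddCommGroup N] [Module k N] (f : M →ₗ[k] B) (g : N →ₗ[k] B)
    (h : M' →ₗ[k] M) : mulMap f g ∘ₗ rTensor N h = mulMap (f ∘ₗ h) g := by
  ext; simp

lemma mulMap_comp_lTensor {M N N' : Type} [AddCommGroup M] [Module k M] [AddCommGroup N]
    [Module k N] [AddCommGroup N'] [Module k N'] (f : M →ₗ[k] B) (g : N →ₗ[k] B)
    (h : N' →ₗ[k] N) : mulMap f g ∘ₗ lTensor M h = mulMap f (g ∘ₗ h) := by
  ext; simp

lemma convOn_eq_mulMap_comp (D : X →ₗ[k] X ⊗[k] X) (f g : X →ₗ[k] B) :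
    convOn D f g = mulMap f g ∘ₗ D := rfl

lemma convOn_assoc {D : X →ₗ[k] X ⊗[k] X} (hD : IsCoassoc D) (f g h : X →ₗ[k] B) :
    convOn D (convOn D f g) h = convOn D f (convOn D g h) := by
  have hl : mulMap (convOn D f g) h = mulMap (mulMap f g) h ∘ₗ rTensor X D := by
    apply TensorProduct.ext'
    intro x y
    simp [convOn_eq_mulMap_comp]
  have hr : mulMap f (convOn D g h)
      = mulMap (mulMap f g) h ∘ₗ (TensorProduct.assoc k X X X).symm.toLinearMap
          ∘ₗ lTensor X D := by
    apply TensorProduct.ext'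
    intro x y
    simp only [convOn_eq_mulMap_comp, comp_apply, mulMap_tmul, lTensor_tmul]
    generalize D y = t
    induction t using TensorProduct.induction_on with
    | zero => simp
    | tmul y z => simp [mul_assoc]
    | add s t hs ht => simp only [mul_add, tmul_add, map_add, hs, ht]
  ext x
  calc mulMap (convOn D f g) h (D x)
      = mulMap (mulMap f g) h (rTensor X D (D x)) := by rw [hl]; rfl
    _ = mulMap f (convOn D g h) (D x) := by rw [← comp_apply (rTensor X D), hD, hr]; rfl

def rightWedge (D : X →ₗ[k] X ⊗[k] X) (g : X ⊗[k] B →ₗ[k] B) : X ⊗[k] B →ₗ[k] X ⊗[k] B :=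
  lTensor X g ∘ₗ (TensorProduct.assoc k X X B).toLinearMap ∘ₗ rTensor B D

lemma wedgeOn_eq_comp_rightWedge (D : X →ₗ[k] X ⊗[k] X) (f g : X ⊗[k] B →ₗ[k] B) :
    wedgeOn D f g = f ∘ₗ rightWedge D g := rfl

lemma rightWedge_tmul (D : X →ₗ[k] X ⊗[k] X) (g : X ⊗[k] B →ₗ[k] B) (x : X) (b : B) :
    rightWedge D g (x ⊗ₜ[k] b) = lTensor X (g ∘ₗ (TensorProduct.mk k X B).flip b) (D x) := by
  simp only [rightWedge, comp_apply, rTensor_tmul]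
  generalize D x = t
  induction t using TensorProduct.induction_on with
  | zero => simp
  | tmul y z => simp
  | add s t hs ht => simp only [add_tmul, map_add, hs, ht]

lemma rightWedge_comp_lTensor (D : X →ₗ[k] X ⊗[k] X) (g : X ⊗[k] B →ₗ[k] B)
    (h : X →ₗ[k] B) :
    rightWedge D g ∘ₗ lTensor X h
      = lTensor X (g ∘ₗ lTensor X h) ∘ₗ (TensorProduct.assoc k X X X).toLinearMap
          ∘ₗ rTensor X D := by
  apply TensorProduct.ext'
  intro x y
  simp only [comp_apply, lTensor_tmul, rTensor_tmul, rightWedge_tmul]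
  generalize D x = t
  induction t using TensorProduct.induction_on with
  | zero => simp
  | tmul y z => simp
  | add s t hs ht => simp only [add_tmul, map_add, hs, ht]

lemma wedgeOn_assoc {D : X →ₗ[k] X ⊗[k] X} (hD : IsCoassoc D) (f g h : X ⊗[k] B →ₗ[k] B) :
    wedgeOn D (wedgeOn D f g) h = wedgeOn D f (wedgeOn D g h) := by
  apply TensorProduct.ext'
  intro x b
  set h' := h ∘ₗ (TensorProduct.mk k X B).flip b
  have hwedge : wedgeOn D g h ∘ₗ (TensorProduct.mk k X B).flip b = g ∘ₗ lTensor X h' ∘ₗ D := by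
    ext y; simp [h', wedgeOn_eq_comp_rightWedge, rightWedge_tmul]
  calc f (rightWedge D g (rightWedge D h (x ⊗ₜ[k] b)))
      = f (lTensor X (g ∘ₗ lTensor X h')
          (TensorProduct.assoc k X X X (rTensor X D (D x)))) := by
        rw [rightWedge_tmul, ← comp_apply (rightWedge D g), rightWedge_comp_lTensor]; rfl
    _ = f (rightWedge D (wedgeOn D g h) (x ⊗ₜ[k] b)) := by
        rw [← comp_apply (rTensor X D), hD, comp_apply, LinearEquiv.coe_coe,
          LinearEquiv.apply_symm_apply, rightWedge_tmul, hwedge]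
        simp only [lTensor_comp, comp_apply]

@[simp] lemma wbar_tmul (f : X →ₗ[k] B) (x : X) (b : B) : wbar f (x ⊗ₜ[k] b) = f x * b := by
  simp [wbar]

@[simp] lemma wbarOp_tmul (f : X →ₗ[k] B) (x : X) (b : B) :
    wbarOp f (x ⊗ₜ[k] b) = b * f x := by
  simp [wbarOp]

lemma wbar_eq_wbarOp_iff (f : X →ₗ[k] B) :
    wbar f = wbarOp f ↔ ∀ (x : X) (b : B), f x * b = b * f x := by
  refine ⟨fun h x b => by simpa using congr($h (x ⊗ₜ[k] b)), fun h => ?_⟩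
  apply TensorProduct.ext'
  intro x b
  simp [h]

lemma wedgeOn_wbar_wbar (D : X →ₗ[k] X ⊗[k] X) (f g : X →ₗ[k] B) :
    wedgeOn D (wbar f) (wbar g) = wbar (convOn D f g) := by
  apply TensorProduct.ext'
  intro x b
  simp only [wedgeOn_eq_comp_rightWedge, comp_apply, rightWedge_tmul, wbar_tmul,
    convOn_eq_mulMap_comp]
  generalize D x = t
  induction t using TensorProduct.induction_on with
  | zero => simp
  | tmul y z => simp [mul_assoc]
  | add s t hs ht => simp only [map_add, add_mul, hs, ht]

lemma wedgeOn_wbarOp_wbar (D : X →ₗ[k] X ⊗[k] X) (f : X →ₗ[k] B) {u : X →ₗ[k] B}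
    (hu : ∀ (y : X) (c : B), u y * c = c * u y) :
    wedgeOn D (wbarOp f) (wbar u) = wbarOp (convOn D f u) := by
  apply TensorProduct.ext'
  intro x b
  simp only [wedgeOn_eq_comp_rightWedge, comp_apply, rightWedge_tmul, wbarOp_tmul,
    convOn_eq_mulMap_comp]
  generalize D x = t
  induction t using TensorProduct.induction_on with
  | zero => simp
  | tmul y z => simp [hu, mul_assoc]
  | add s t hs ht => simp only [map_add, mul_add, hs, ht]

lemma RegPair.convOn_unit {D : X →ₗ[k] X ⊗[k] X} (hD : IsCoassoc D) {u f g : X →ₗ[k] B}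
    (h : RegPair D u f g) : convOn D f u = f := by
  obtain ⟨-, hgf, hfgf, -⟩ := h
  rw [← hgf, ← convOn_assoc hD, hfgf]

end HomProduct

section TensorCoalgebra

variable {X Y : Type} [AddCommGroup X] [Module k X] [AddCommGroup Y] [Module k Y]

lemma isCoassoc_deltaT {dX : X →ₗ[k] X ⊗[k] X} {dY : Y →ₗ[k] Y ⊗[k] Y}
    (hX : IsCoassoc dX) (hY : IsCoassoc dY) : IsCoassoc (deltaT dX dY) := by
  set σ := (tensorTensorTensorComm k X X Y Y).toLinearMap
  have hL : rTensor (X ⊗[k] Y) (deltaT dX dY) ∘ₗ σ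
      = rTensor (X ⊗[k] Y) σ ∘ₗ (tensorTensorTensorComm k (X ⊗[k] X) X (Y ⊗[k] Y) Y).toLinearMap
          ∘ₗ TensorProduct.map (rTensor X dX) (rTensor Y dY) := by
    apply TensorProduct.ext_fourfold'
    intro a b c d
    simp [σ, deltaT]
  have hR : lTensor (X ⊗[k] Y) (deltaT dX dY) ∘ₗ σ
      = lTensor (X ⊗[k] Y) σ ∘ₗ (tensorTensorTensorComm k X (X ⊗[k] X) Y (Y ⊗[k] Y)).toLinearMap
          ∘ₗ TensorProduct.map (lTensor X dX) (lTensor Y dY) := by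
    apply TensorProduct.ext_fourfold'
    intro a b c d
    simp [σ, deltaT]
  have hmid : rTensor (X ⊗[k] Y) σ
        ∘ₗ (tensorTensorTensorComm k (X ⊗[k] X) X (Y ⊗[k] Y) Y).toLinearMap
        ∘ₗ TensorProduct.map (TensorProduct.assoc k X X X).symm.toLinearMap
            (TensorProduct.assoc k Y Y Y).symm.toLinearMap
      = (TensorProduct.assoc k (X ⊗[k] Y) (X ⊗[k] Y) (X ⊗[k] Y)).symm.toLinearMap
          ∘ₗ lTensor (X ⊗[k] Y) σ
          ∘ₗ (tensorTensorTensorComm k X (X ⊗[k] X) Y (Y ⊗[k] Y)).toLinearMap := by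
    ext
    simp [σ]
  unfold IsCoassoc deltaT
  calc rTensor (X ⊗[k] Y) (deltaT dX dY) ∘ₗ σ ∘ₗ TensorProduct.map dX dY
      = rTensor (X ⊗[k] Y) σ ∘ₗ (tensorTensorTensorComm k (X ⊗[k] X) X (Y ⊗[k] Y) Y).toLinearMap
          ∘ₗ TensorProduct.map (rTensor X dX ∘ₗ dX) (rTensor Y dY ∘ₗ dY) := by
        rw [← comp_assoc, hL, map_comp]; simp only [comp_assoc]
    _ = (rTensor (X ⊗[k] Y) σ
          ∘ₗ (tensorTensorTensorComm k (X ⊗[k] X) X (Y ⊗[k] Y) Y).toLinearMap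
          ∘ₗ TensorProduct.map (TensorProduct.assoc k X X X).symm.toLinearMap
            (TensorProduct.assoc k Y Y Y).symm.toLinearMap)
          ∘ₗ TensorProduct.map (lTensor X dX ∘ₗ dX) (lTensor Y dY ∘ₗ dY) := by
        rw [hX, hY, map_comp]; simp only [comp_assoc]
    _ = (TensorProduct.assoc k (X ⊗[k] Y) (X ⊗[k] Y) (X ⊗[k] Y)).symm.toLinearMap
          ∘ₗ lTensor (X ⊗[k] Y) (deltaT dX dY) ∘ₗ σ ∘ₗ TensorProduct.map dX dY := by
        rw [hmid, map_comp, ← comp_assoc (TensorProduct.map dX dY) σ, hR]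
        simp only [comp_assoc]

lemma deltaPow_isCoassoc (W : WeakBialgebraStr k H) : ∀ n : ℕ, IsCoassoc (deltaPow W n)
  | 0 => LinearMap.ext W.coassoc
  | n + 1 => isCoassoc_deltaT (LinearMap.ext W.coassoc) (deltaPow_isCoassoc W n)

end TensorCoalgebra

namespace WeakBialgebraStr

variable (W : WeakBialgebraStr k H)

def rightMul (q : H) : H →ₗ[k] H := W.mu ∘ₗ (TensorProduct.mk k H H).flip q

@[simp] lemma rightMul_apply (q x : H) : W.rightMul q x = W.mu (x ⊗ₜ[k] q) := rfl

lemma delta_eq_delta_one_mul (x : H) : W.delta x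
    = TensorProduct.map W.mu W.mu
        (tensorTensorTensorComm k H H H H (W.delta W.one ⊗ₜ[k] W.delta x)) := by
  simpa [W.one_mul'] using W.a1 W.one x

def contractLeft {M : Type} [AddCommGroup M] [Module k M] (h : H) : H ⊗[k] M →ₗ[k] M :=
  (TensorProduct.lid k M).toLinearMap ∘ₗ rTensor M (W.epsmu ∘ₗ (TensorProduct.mk k H H).flip h)

@[simp] lemma contractLeft_tmul {M : Type} [AddCommGroup M] [Module k M] (h p : H) (m : M) :
    W.contractLeft h (p ⊗ₜ[k] m) = W.epsmu (p ⊗ₜ[k] h) • m := by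
  simp [contractLeft]

lemma apply_piL {M : Type} [AddCommGroup M] [Module k M] (g : H →ₗ[k] M) (h : H) :
    g (W.piL h) = W.contractLeft h (lTensor H g (W.delta W.one)) := by
  simp only [piL, comp_apply, mk_apply, LinearEquiv.coe_coe]
  generalize W.delta W.one = t
  induction t using TensorProduct.induction_on with
  | zero => simp
  | tmul p q => simp [epsmu]
  | add s t hs ht => simp only [add_tmul, map_add, hs, ht]

lemma piL_eq_contractLeft (h : H) : W.piL h = W.contractLeft h (W.delta W.one) := by
  simpa using W.apply_piL LinearMap.id h

def mulSwapMid : (H ⊗[k] H) ⊗[k] (H ⊗[k] H) →ₗ[k] H ⊗[k] (H ⊗[k] H) :=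
  lTensor H (rTensor H (W.mu ∘ₗ (TensorProduct.comm k H H).toLinearMap)
      ∘ₗ (TensorProduct.assoc k H H H).symm.toLinearMap)
    ∘ₗ (TensorProduct.assoc k H H (H ⊗[k] H)).toLinearMap

@[simp] lemma mulSwapMid_tmul (p q r s : H) :
    W.mulSwapMid ((p ⊗ₜ[k] q) ⊗ₜ[k] (r ⊗ₜ[k] s)) = p ⊗ₜ[k] (W.mu (r ⊗ₜ[k] q) ⊗ₜ[k] s) := by
  simp [mulSwapMid]

def mulSwapRight : (H ⊗[k] H) ⊗[k] (H ⊗[k] H) →ₗ[k] H ⊗[k] (H ⊗[k] H) :=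
  lTensor H (lTensor H W.mu ∘ₗ (TensorProduct.assoc k H H H).toLinearMap
      ∘ₗ (TensorProduct.comm k H (H ⊗[k] H)).toLinearMap)
    ∘ₗ (TensorProduct.assoc k H H (H ⊗[k] H)).toLinearMap

@[simp] lemma mulSwapRight_tmul (p q r s : H) :
    W.mulSwapRight ((p ⊗ₜ[k] q) ⊗ₜ[k] (r ⊗ₜ[k] s)) = p ⊗ₜ[k] (r ⊗ₜ[k] W.mu (s ⊗ₜ[k] q)) := by
  simp [mulSwapRight]

lemma lTensor_delta_delta_one : lTensor H W.delta (W.delta W.one)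
    = W.mulSwapMid (W.delta W.one ⊗ₜ[k] W.delta W.one) := by
  have hmap : (TensorProduct.assoc k H H H).toLinearMap
      ∘ₗ rTensor H (lTensor H (W.mu ∘ₗ (TensorProduct.comm k H H).toLinearMap)
            ∘ₗ (TensorProduct.assoc k H H H).toLinearMap)
      ∘ₗ (TensorProduct.assoc k (H ⊗[k] H) H H).symm.toLinearMap = W.mulSwapMid := by
    apply TensorProduct.ext_fourfold'
    intro p q r s
    simp
  rw [← hmap]
  simp only [comp_apply, LinearEquiv.coe_coe]
  rw [← W.a3', W.coassoc]
  simp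

/-- With `Ψ((p ⊗ m ⊗ s) ⊗ (y ⊗ z)) = ε(m z) • p y ⊗ s`, both sides are images of
`Δ²(1) ⊗ Δ(x)`. The left side uses `Δ(x) = Δ(1)Δ(x)` and axiom `a3'`; the right
side uses coassociativity and the counit. -/
lemma lTensor_piL_delta (x : H) :
    lTensor H W.piL (W.delta x) = rTensor H (W.rightMul x) (W.delta W.one) := by
  let Ψ : (H ⊗[k] (H ⊗[k] H)) ⊗[k] (H ⊗[k] H) →ₗ[k] H ⊗[k] H :=
    TensorProduct.map W.mu ((TensorProduct.lid k H).toLinearMap ∘ₗ rTensor H W.epsmu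
        ∘ₗ (TensorProduct.rightComm k H H H).toLinearMap)
      ∘ₗ (tensorTensorTensorComm k H (H ⊗[k] H) H H).toLinearMap
  have hΨ : ∀ p m s y z : H, Ψ ((p ⊗ₜ[k] (m ⊗ₜ[k] s)) ⊗ₜ[k] (y ⊗ₜ[k] z))
      = W.epsmu (m ⊗ₜ[k] z) • (W.mu (p ⊗ₜ[k] y) ⊗ₜ[k] s) := by
    intro p m s y z; simp [Ψ, tmul_smul]
  have hpiL : lTensor H W.piL ∘ₗ TensorProduct.map W.mu W.mu
        ∘ₗ (tensorTensorTensorComm k H H H H).toLinearMap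
      = Ψ ∘ₗ rTensor (H ⊗[k] H)
          (W.mulSwapMid ∘ₗ (TensorProduct.mk k (H ⊗[k] H) (H ⊗[k] H)).flip (W.delta W.one)) := by
    apply TensorProduct.ext_fourfold'
    intro p q y z
    simp only [comp_apply, LinearEquiv.coe_coe, tensorTensorTensorComm_tmul, map_tmul,
      lTensor_tmul, rTensor_tmul, flip_apply, mk_apply, piL_eq_contractLeft]
    generalize W.delta W.one = t
    induction t using TensorProduct.induction_on with
    | zero => simp
    | tmul r s => simp [hΨ, epsmu, W.mul_assoc', tmul_smul]
    | add s t hs ht => simp only [tmul_add, add_tmul, map_add, hs, ht]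
  have hcounit : ∀ c : H, Ψ ∘ₗ rTensor (H ⊗[k] H)
        ((TensorProduct.assoc k H H H).toLinearMap ∘ₗ (TensorProduct.mk k (H ⊗[k] H) H).flip c)
      = (TensorProduct.mk k H H).flip c ∘ₗ (TensorProduct.rid k H).toLinearMap
          ∘ₗ lTensor H W.eps ∘ₗ TensorProduct.map W.mu W.mu
          ∘ₗ (tensorTensorTensorComm k H H H H).toLinearMap := by
    intro c
    apply TensorProduct.ext_fourfold'
    intro a₁ a₂ x₁ x₂
    simp [hΨ, epsmu, smul_tmul']
  have hcoassoc : Ψ (TensorProduct.assoc k H H H (rTensor H W.delta (W.delta W.one))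
        ⊗ₜ[k] W.delta x) = rTensor H (W.rightMul x) (W.delta W.one) := by
    generalize W.delta W.one = t
    induction t using TensorProduct.induction_on with
    | zero => simp
    | tmul a c =>
      have := congr($(hcounit c) (W.delta a ⊗ₜ[k] W.delta x))
      simp only [comp_apply, rTensor_tmul, flip_apply, mk_apply, LinearEquiv.coe_coe] at this
      rw [rTensor_tmul, this, ← W.a1, W.counit_r]
      rfl
    | add s t hs ht => simp only [map_add, add_tmul, hs, ht]
  calc lTensor H W.piL (W.delta x)
      = Ψ (W.mulSwapMid (W.delta W.one ⊗ₜ[k] W.delta W.one) ⊗ₜ[k] W.delta x) := by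
        conv_lhs => rw [W.delta_eq_delta_one_mul x]
        simpa using congr($hpiL (W.delta W.one ⊗ₜ[k] W.delta x))
    _ = rTensor H (W.rightMul x) (W.delta W.one) := by
        rw [← lTensor_delta_delta_one, ← hcoassoc, W.coassoc, LinearEquiv.apply_symm_apply]

end WeakBialgebraStr

namespace Cocomm

variable {W : WeakBialgebraStr k H}

/-- Axiom `a3'` puts the product of the two copies of `Δ(1)` in the middle leg of `Δ²(1)`;
cocommutativity moves it to the last leg. -/
lemma lTensor_delta_delta_one (hco : Cocomm W) :
    lTensor H W.delta (W.delta W.one) = W.mulSwapRight (W.delta W.one ⊗ₜ[k] W.delta W.one) := by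
  have hswap : lTensor H (TensorProduct.comm k H H).toLinearMap ∘ₗ W.mulSwapMid
      = W.mulSwapRight ∘ₗ lTensor (H ⊗[k] H) (TensorProduct.comm k H H).toLinearMap := by
    apply TensorProduct.ext_fourfold'
    intro p q r s
    simp
  calc lTensor H W.delta (W.delta W.one)
      = lTensor H ((TensorProduct.comm k H H).toLinearMap ∘ₗ W.delta) (W.delta W.one) := by
        rw [show (TensorProduct.comm k H H).toLinearMap ∘ₗ W.delta = W.delta from
          LinearMap.ext hco]
    _ = W.mulSwapRight (W.delta W.one ⊗ₜ[k] W.delta W.one) := by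
        rw [lTensor_comp, comp_apply, W.lTensor_delta_delta_one, ← comp_apply (lTensor H _),
          hswap, comp_apply, lTensor_tmul, LinearEquiv.coe_coe, hco W.one]

end Cocomm

def actAt (φ : H ⊗[k] B →ₗ[k] B) (c : B) : H →ₗ[k] B := φ ∘ₗ (TensorProduct.mk k H B).flip c

@[simp] lemma actAt_apply (φ : H ⊗[k] B →ₗ[k] B) (c : B) (h : H) :
    actAt φ c h = φ (h ⊗ₜ[k] c) := rfl

lemma u1_eq_actAt (φ : H ⊗[k] B →ₗ[k] B) : u1 φ = actAt φ 1 := rfl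

@[simp] lemma u1_apply (φ : H ⊗[k] B →ₗ[k] B) (h : H) : u1 φ h = φ (h ⊗ₜ[k] (1 : B)) := rfl

namespace IsWMA

variable {W : WeakBialgebraStr k H} {φ : H ⊗[k] B →ₗ[k] B} (hφ : IsWMA W φ)
include hφ

lemma act_mul (h : H) (b c : B) :
    φ (h ⊗ₜ[k] (b * c)) = mulMap (actAt φ b) (actAt φ c) (W.delta h) := by
  rw [hφ.1 h b c]
  generalize W.delta h = t
  induction t using TensorProduct.induction_on with
  | zero => simp
  | tmul p q => simp
  | add s t hs ht => simp only [add_tmul, map_add, hs, ht]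

lemma actAt_u1 (q : H) : actAt φ (u1 φ q) = u1 φ ∘ₗ W.rightMul q := by
  ext p
  simp [hφ.2.2]

lemma mulMap_actAt_delta_one (b c : B) :
    mulMap (actAt φ b) (actAt φ c) (W.delta W.one) = b * c := by
  rw [← hφ.act_mul, hφ.2.1]

lemma u1_mul (q : H) (c : B) :
    u1 φ q * c = mulMap (u1 φ ∘ₗ W.rightMul q) (actAt φ c) (W.delta W.one) := by
  rw [← hφ.actAt_u1, hφ.mulMap_actAt_delta_one]

lemma mul_u1 (q : H) (c : B) :
    c * u1 φ q = mulMap (actAt φ c) (u1 φ ∘ₗ W.rightMul q) (W.delta W.one) := by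
  rw [← hφ.actAt_u1, hφ.mulMap_actAt_delta_one]

lemma convOn_u1_actAt (c : B) : convOn W.delta (u1 φ) (actAt φ c) = actAt φ c := by
  ext h
  simp [convOn_eq_mulMap_comp, u1_eq_actAt, ← hφ.act_mul]

lemma convOn_actAt_u1 (c : B) : convOn W.delta (actAt φ c) (u1 φ) = actAt φ c := by
  ext h
  simp [convOn_eq_mulMap_comp, u1_eq_actAt, ← hφ.act_mul]

lemma act_lTensor_mulLeft_delta (m : B) (g : H →ₗ[k] B) (h : H) :
    φ (lTensor H (LinearMap.mulLeft k m ∘ₗ g) (W.delta h))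
      = convOn W.delta (actAt φ m) (φ ∘ₗ lTensor H g ∘ₗ W.delta) h := by
  have hmap : φ ∘ₗ lTensor H (LinearMap.mulLeft k m ∘ₗ g)
      = mulMap (actAt φ m) (φ ∘ₗ lTensor H g) ∘ₗ (TensorProduct.assoc k H H H).toLinearMap
          ∘ₗ rTensor H W.delta := by
    apply TensorProduct.ext'
    intro p q
    simp only [comp_apply, lTensor_tmul, rTensor_tmul, mulLeft_apply, hφ.act_mul]
    generalize W.delta p = t
    induction t using TensorProduct.induction_on with
    | zero => simp
    | tmul a b => simp
    | add s t hs ht => simp only [add_tmul, map_add, hs, ht]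
  rw [← comp_apply φ, hmap, comp_apply, comp_apply, W.coassoc h, LinearEquiv.coe_coe,
    LinearEquiv.apply_symm_apply, ← comp_apply (mulMap _ _), mulMap_comp_lTensor]
  rfl

lemma lTensor_mulRight_u1_delta_one (c : B) :
    lTensor H (LinearMap.mulRight k c ∘ₗ u1 φ) (W.delta W.one)
      = lTensor H (actAt φ c) (W.delta W.one) := by
  have hmap : lTensor H (LinearMap.mulRight k c ∘ₗ u1 φ)
      = lTensor H (mulMap (u1 φ) (actAt φ c)) ∘ₗ W.mulSwapMid
          ∘ₗ (TensorProduct.mk k (H ⊗[k] H) (H ⊗[k] H)).flip (W.delta W.one) := by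
    apply TensorProduct.ext'
    intro p q
    simp only [comp_apply, lTensor_tmul, mulRight_apply, hφ.u1_mul q c, flip_apply, mk_apply]
    generalize W.delta W.one = t
    induction t using TensorProduct.induction_on with
    | zero => simp
    | tmul r s => simp
    | add s t hs ht => simp only [tmul_add, map_add, hs, ht]
  rw [hmap, comp_apply, comp_apply, flip_apply, mk_apply, ← W.lTensor_delta_delta_one,
    ← lTensor_comp_apply, ← convOn_eq_mulMap_comp, hφ.convOn_u1_actAt]

lemma lTensor_mulLeft_u1_delta_one (hco : Cocomm W) (c : B) :
    lTensor H (LinearMap.mulLeft k c ∘ₗ u1 φ) (W.delta W.one)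
      = lTensor H (actAt φ c) (W.delta W.one) := by
  have hmap : lTensor H (LinearMap.mulLeft k c ∘ₗ u1 φ)
      = lTensor H (mulMap (actAt φ c) (u1 φ)) ∘ₗ W.mulSwapRight
          ∘ₗ (TensorProduct.mk k (H ⊗[k] H) (H ⊗[k] H)).flip (W.delta W.one) := by
    apply TensorProduct.ext'
    intro p q
    simp only [comp_apply, lTensor_tmul, mulLeft_apply, hφ.mul_u1 q c, flip_apply, mk_apply]
    generalize W.delta W.one = t
    induction t using TensorProduct.induction_on with
    | zero => simp
    | tmul r s => simp
    | add s t hs ht => simp only [tmul_add, map_add, hs, ht]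
  rw [hmap, comp_apply, comp_apply, flip_apply, mk_apply, ← hco.lTensor_delta_delta_one,
    ← lTensor_comp_apply, ← convOn_eq_mulMap_comp, hφ.convOn_actAt_u1]

lemma u1_comp_piL {lam : H →ₗ[k] H}
    (hlam : W.mu ∘ₗ TensorProduct.map LinearMap.id lam ∘ₗ W.delta = W.piL) :
    u1 φ ∘ₗ W.piL = u1 φ := by
  set g := u1 φ ∘ₗ lam
  have hpiL : u1 φ ∘ₗ W.piL = φ ∘ₗ lTensor H g ∘ₗ W.delta := by
    rw [← hlam]
    ext h
    simp only [comp_apply]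
    generalize W.delta h = t
    induction t using TensorProduct.induction_on with
    | zero => simp
    | tmul p q => simp [g, hφ.2.2]
    | add s t hs ht => simp only [map_add, hs, ht]
  ext h
  calc u1 φ (W.piL h)
      = φ (lTensor H (LinearMap.mulLeft k 1 ∘ₗ g) (W.delta h)) := by
        rw [← comp_apply (u1 φ), hpiL]; simp
    _ = mulMap (u1 φ) (u1 φ) (lTensor H W.piL (W.delta h)) := by
        rw [hφ.act_lTensor_mulLeft_delta, ← hpiL, u1_eq_actAt, convOn_eq_mulMap_comp,
          ← mulMap_comp_lTensor]
        rfl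
    _ = mulMap (u1 φ) (u1 φ) (rTensor H (W.rightMul h) (W.delta W.one)) := by
        rw [W.lTensor_piL_delta]
    _ = u1 φ h := by
        rw [← comp_apply (mulMap _ _), mulMap_comp_rTensor, ← hφ.actAt_u1, u1_eq_actAt,
          hφ.mulMap_actAt_delta_one, mul_one]

lemma u1_mul_comm (hco : Cocomm W) {lam : H →ₗ[k] H}
    (hlam : W.mu ∘ₗ TensorProduct.map LinearMap.id lam ∘ₗ W.delta = W.piL) (h : H) (c : B) :
    u1 φ h * c = c * u1 φ h := by
  rw [← hφ.u1_comp_piL hlam, comp_apply]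
  calc u1 φ (W.piL h) * c
      = W.contractLeft h (lTensor H (LinearMap.mulRight k c ∘ₗ u1 φ) (W.delta W.one)) :=
        W.apply_piL (LinearMap.mulRight k c ∘ₗ u1 φ) h
    _ = W.contractLeft h (lTensor H (LinearMap.mulLeft k c ∘ₗ u1 φ) (W.delta W.one)) := by
        rw [hφ.lTensor_mulRight_u1_delta_one, hφ.lTensor_mulLeft_u1_delta_one hco]
    _ = c * u1 φ (W.piL h) := (W.apply_piL (LinearMap.mulLeft k c ∘ₗ u1 φ) h).symm

lemma wedgeOn_deltaT_eq_wbar {φd : H ⊗[k] B →ₗ[k] B} (hd : wedgeOn W.delta φ φd = wbar (u1 φ))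
    {Y : Type} [AddCommGroup Y] [Module k Y] {dY : Y →ₗ[k] Y ⊗[k] Y}
    {φY ΦY : Y ⊗[k] B →ₗ[k] B} {mY : Y →ₗ[k] H} (hY : wedgeOn dY φY ΦY = wbar (u1 φ ∘ₗ mY)) :
    wedgeOn (deltaT W.delta dY)
        (φ ∘ₗ lTensor H φY ∘ₗ (TensorProduct.assoc k H Y B).toLinearMap)
        (ΦY ∘ₗ lTensor Y φd ∘ₗ (TensorProduct.leftComm k H Y B).toLinearMap
          ∘ₗ (TensorProduct.assoc k H Y B).toLinearMap)
      = wbar (u1 φ ∘ₗ W.mu ∘ₗ lTensor H mY) := by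
  apply TensorProduct.ext_threefold
  intro h y b
  set g := φd ∘ₗ (TensorProduct.mk k H B).flip b
  have hsplit : wedgeOn (deltaT W.delta dY)
        (φ ∘ₗ lTensor H φY ∘ₗ (TensorProduct.assoc k H Y B).toLinearMap)
        (ΦY ∘ₗ lTensor Y φd ∘ₗ (TensorProduct.leftComm k H Y B).toLinearMap
          ∘ₗ (TensorProduct.assoc k H Y B).toLinearMap) ((h ⊗ₜ[k] y) ⊗ₜ[k] b)
      = φ (lTensor H (wedgeOn dY φY ΦY ∘ₗ TensorProduct.mk k Y B y ∘ₗ g) (W.delta h)) := by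
    simp only [wedgeOn, deltaT, comp_apply, rTensor_tmul, LinearEquiv.coe_coe, map_tmul]
    generalize W.delta h = s
    induction s using TensorProduct.induction_on with
    | zero => simp
    | tmul h₁ h₂ =>
      simp only [lTensor_tmul, comp_apply, mk_apply, rTensor_tmul, g, flip_apply]
      generalize dY y = t
      induction t using TensorProduct.induction_on with
      | zero => simp
      | tmul y₁ y₂ => simp
      | add s t hs ht => simp only [tmul_add, add_tmul, map_add, hs, ht]
    | add s t hs ht => simp only [add_tmul, map_add, hs, ht]
  have hinner : wedgeOn dY φY ΦY ∘ₗ TensorProduct.mk k Y B y ∘ₗ g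
      = LinearMap.mulLeft k (u1 φ (mY y)) ∘ₗ g := by
    rw [hY]; ext; simp
  have hg : φ ∘ₗ lTensor H g ∘ₗ W.delta = LinearMap.mulRight k b ∘ₗ u1 φ := by
    ext p
    have := congr($hd (p ⊗ₜ[k] b))
    simp only [wedgeOn, comp_apply, rTensor_tmul, wbar_tmul] at this
    simp only [comp_apply, mulRight_apply, ← this, LinearEquiv.coe_coe, g]
    generalize W.delta p = t
    induction t using TensorProduct.induction_on with
    | zero => simp
    | tmul a c => simp
    | add s t hs ht => simp only [add_tmul, map_add, hs, ht]
  rw [hsplit, hinner, hφ.act_lTensor_mulLeft_delta, hg, wbar_tmul]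
  calc convOn W.delta (actAt φ (u1 φ (mY y))) (LinearMap.mulRight k b ∘ₗ u1 φ) h
      = convOn W.delta (actAt φ (u1 φ (mY y))) (u1 φ) h * b := by
        simp only [convOn_eq_mulMap_comp, comp_apply]
        generalize W.delta h = t
        induction t using TensorProduct.induction_on with
        | zero => simp
        | tmul a c => simp [mul_assoc]
        | add s t hs ht => simp only [map_add, add_mul, hs, ht]
    _ = u1 φ (W.mu (h ⊗ₜ[k] mY y)) * b := by
        rw [hφ.convOn_actAt_u1, actAt_apply, ← hφ.2.2]

lemma exists_wedgeOn_phiPow_eq_wbar {φd : H ⊗[k] B →ₗ[k] B}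
    (hd : wedgeOn W.delta φ φd = wbar (u1 φ)) :
    ∀ n : ℕ, ∃ Φ : (HpowM k H n).carrier ⊗[k] B →ₗ[k] B,
      wedgeOn (deltaPow W n) (phiPow φ n) Φ = wbar (uPow W φ n)
  | 0 => ⟨φd, hd⟩
  | n + 1 => by
      obtain ⟨Φ, hΦ⟩ := exists_wedgeOn_phiPow_eq_wbar hd n
      exact ⟨_, hφ.wedgeOn_deltaT_eq_wbar hd hΦ⟩

end IsWMA

end WK

open WK in
theorem statement13 {k : Type} [CommRing k] {H : Type} [AddCommGroup H] [Module k H]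
    {B : Type} [Ring B] [Algebra k B]
    (W : WeakHopfStr k H) (hco : Cocomm W.toWeakBialgebraStr)
    (φ : H ⊗[k] B →ₗ[k] B) (hφ : IsWMA W.toWeakBialgebraStr φ)
    (hinv : ∃ φd : H ⊗[k] B →ₗ[k] B,
      wedgeOn W.toWeakBialgebraStr.delta φ φd = wbar (u1 φ))
    (n : ℕ) (ω ωi : (HpowM k H n).carrier →ₗ[k] B)
    (hreg : RegPair (deltaPow W.toWeakBialgebraStr n)
      (uPow W.toWeakBialgebraStr φ n) ω ωi) :
    wedgeOn (deltaPow W.toWeakBialgebraStr n) (wbar ω) (phiPow φ n)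
        = wedgeOn (deltaPow W.toWeakBialgebraStr n) (wbarOp ω) (phiPow φ n)
      ↔ ∀ (x : (HpowM k H n).carrier) (b : B), ω x * b = b * ω x := by
  refine ⟨fun hwedge => (wbar_eq_wbarOp_iff ω).mp ?_,
    fun hcentral => by rw [(wbar_eq_wbarOp_iff ω).mpr hcentral]⟩
  set D := deltaPow W.toWeakBialgebraStr n
  set u := uPow W.toWeakBialgebraStr φ n
  have hD : IsCoassoc D := deltaPow_isCoassoc _ n
  have hu : ∀ (y : (HpowM k H n).carrier) (c : B), u y * c = c * u y :=
    fun y c => hφ.u1_mul_comm hco W.antipode_r _ c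
  obtain ⟨φd, hd⟩ := hinv
  obtain ⟨Φ, hΦ⟩ := hφ.exists_wedgeOn_phiPow_eq_wbar hd n
  calc wbar ω = wbar (convOn D ω u) := by rw [hreg.convOn_unit hD]
    _ = wedgeOn D (wedgeOn D (wbar ω) (phiPow φ n)) Φ := by
        rw [wedgeOn_assoc hD, hΦ, wedgeOn_wbar_wbar]
    _ = wedgeOn D (wedgeOn D (wbarOp ω) (phiPow φ n)) Φ := by rw [hwedge]
    _ = wbarOp ω := by
        rw [wedgeOn_assoc hD, hΦ, wedgeOn_wbarOp_wbar D ω hu, hreg.convOn_unit hD]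
end
end
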